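/- arXiv:2206.07236 — 6 statements merged into one kernel-verified Lean document; each statement's English description precedes it below -/
import Mathlib

section
/- Fix δ ≥ 0 and α ∈ (0,1) such that k := ⌈(1−α)(n+1)⌉ ≤ n. For each j ∈ {1,…,n} define the step-down nonconformity score S_j := inf{λ > 0 : L(X_j, Y_j, I_j, λ') ≤ δ for all λ' ≥ λ}, and let λ̂ be the k-th smallest value among S_1, …, S_n. Then ℙ( L(X_{n+1}, Y_{n+1}, I_{n+1}, λ̂) ≤ δ ) ≥ 1 − α; that is, the step-down probe-based conformalization procedure returns a probe-adapted predictive set mapping x ↦ C^s_{λ̂}(x) that controls the (1−α)-value-at-risk of the FPP loss at level δ. -/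
/-!
The FPP loss is a right-continuous step function of the threshold, so the loss of an instance
at `λ` is at most `δ` as soon as its step-down score is at most `λ`. For the test point this
holds whenever fewer than `k` of the `n + 1` scores lie strictly below its own: then at most
`k - 1` calibration scores do, so the `k`-th smallest calibration score `λ̂` is at least the test
score. The `n + 1` scores are i.i.d., hence exchangeable, and in every configuration at least `k`
indices have fewer than `k` scores strictly below them; so the test index does with probability
at least `k / (n + 1) ≥ 1 - α`.
-/

open MeasureTheory ProbabilityTheory Set

/-- The False Probe Proportion (FPP) loss of the threshold predictive set `C^s_λ(x)`
on an instance `z = (x, y, I)`: the fraction, among the queried probes `i ∈ I` that the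
set answers (those with `|s_i(x)| > λ`), of probes answered incorrectly
(those with `-φ_i(y)·s_i(x) > λ`). -/
noncomputable def fpp {𝒳 𝒴 ι : Type*} [Fintype ι]
    (φ : ι → 𝒴 → ℝ) (s : ι → 𝒳 → ℝ) (z : 𝒳 × 𝒴 × Finset ι) (lam : ℝ) : ℝ :=
  (Nat.card {i : ι // i ∈ z.2.2 ∧ lam < -(φ i z.2.1) * s i z.1} : ℝ) /
    max 1 (Nat.card {i : ι // i ∈ z.2.2 ∧ lam < |s i z.1|} : ℝ)

/-- The `k`-th smallest value (k-th order statistic, `1 ≤ k ≤ n`) among `v 0, …, v (n-1)`. -/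
noncomputable def kthSmallest {n : ℕ} (v : Fin n → ℝ) (k : ℕ) : ℝ :=
  sInf {t : ℝ | k ≤ Nat.card {j : Fin n // v j ≤ t}}

open Filter Topology
open scoped ENNReal

lemma eventually_nhdsGE_lt_iff (t c : ℝ) : ∀ᶠ u in 𝓝[≥] t, (u < c ↔ t < c) := by
  by_cases h : t < c
  · filter_upwards [nhdsWithin_le_nhds (eventually_lt_nhds h)] with u hu using iff_of_true hu h
  · filter_upwards [self_mem_nhdsWithin] with u (hu : t ≤ u)
    exact iff_of_false (fun hu' => h (hu.trans_lt hu')) h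

lemma csInf_mem_of_eventually_nhdsGE {U : Set ℝ} (hne : U.Nonempty) (hbdd : BddBelow U)
    (h : ∀ᶠ u in 𝓝[≥] sInf U, u ∈ U → sInf U ∈ U) : sInf U ∈ U :=
  let ⟨_, hu, hmem⟩ := ((isGLB_csInf hne hbdd).frequently_mem hne).and_eventually h |>.exists
  hmem hu

lemma le_card_le_kthSmallest {n k : ℕ} (v : Fin n → ℝ) (hk1 : 1 ≤ k) (hkn : k ≤ n) :
    k ≤ Nat.card {j // v j ≤ kthSmallest v k} := by
  set U := {t : ℝ | k ≤ Nat.card {j // v j ≤ t}}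
  have hne : U.Nonempty := by
    obtain ⟨t, ht⟩ := (eventually_all.2 fun j => eventually_ge_atTop (v j)).exists
    refine ⟨t, ?_⟩
    rwa [Set.mem_ofPred_eq, Nat.card_congr (Equiv.subtypeUnivEquiv ht), Nat.card_eq_fintype_card,
      Fintype.card_fin]
  have hbdd : BddBelow U := by
    obtain ⟨t, ht⟩ := (eventually_all.2 fun j => eventually_lt_atBot (v j)).exists
    refine ⟨t, fun u hu => le_of_not_gt fun hut => ?_⟩
    have : IsEmpty {j // v j ≤ u} := ⟨fun j => (ht j).not_ge (j.2.trans hut.le)⟩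
    rw [Set.mem_ofPred_eq, Nat.card_of_isEmpty] at hu
    omega
  refine csInf_mem_of_eventually_nhdsGE hne hbdd ?_
  filter_upwards [eventually_all.2 fun j => eventually_nhdsGE_lt_iff (sInf U) (v j)] with u hu
  simp only [U, Set.mem_ofPred_eq, ← not_lt, hu, imp_self]

section StrictRank

variable {κ β : Type*} [Fintype κ] [LinearOrder β]

def strictRank (v : κ → β) (m : κ) : ℕ :=
  (Finset.univ.filter fun j => v j < v m).card

lemma strictRank_comp_perm (v : κ → β) (e : Equiv.Perm κ) (m : κ) :
    strictRank (v ∘ e) m = strictRank v (e m) := by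
  simp only [strictRank, ← Fintype.card_subtype]
  exact Fintype.card_congr (e.subtypeEquiv fun _ => Iff.rfl)

/-- If fewer than `k` indices had strict rank below `k`, an index outside them with minimal
value would have only those indices below it. -/
lemma le_card_strictRank_lt (v : κ → β) {k : ℕ} (hk : k ≤ Fintype.card κ) :
    k ≤ (Finset.univ.filter fun m => strictRank v m < k).card := by
  classical
  set B := Finset.univ.filter fun m => strictRank v m < k
  by_contra! hB
  have hne : Bᶜ.Nonempty := by
    rw [← Finset.card_pos, Finset.card_compl]
    omega
  obtain ⟨m, hmB, hmin⟩ := Bᶜ.exists_min_image v hne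
  have hsub : (Finset.univ.filter fun j => v j < v m) ⊆ B := fun j hj => by
    by_contra hjB
    exact (hmin j (Finset.mem_compl.2 hjB)).not_gt (Finset.mem_filter.1 hj).2
  exact Finset.mem_compl.1 hmB
    (Finset.mem_filter.2 ⟨Finset.mem_univ m, (Finset.card_le_card hsub).trans_lt hB⟩)

end StrictRank

lemma measurableSet_strictRank_lt {κ : Type*} [Fintype κ] (m : κ) (k : ℕ) :
    MeasurableSet {v : κ → ℝ | strictRank v m < k} := by
  have hrank : Measurable fun v : κ → ℝ => strictRank v m := by
    simp only [strictRank, Finset.card_filter]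
    exact Finset.measurable_sum _ fun j _ => Measurable.ite
      (measurableSet_lt (measurable_pi_apply j) (measurable_pi_apply m))
      measurable_const measurable_const
  exact hrank (MeasurableSet.of_discrete (s := Iio k))

/-- The `card κ` rank events have equal measure by exchangeability, and every point lies in at
least `k` of them. -/
lemma natCast_mul_le_mul_measure_strictRank_lt {κ : Type*} [Fintype κ] {ν : Measure (κ → ℝ)}
    (hν : ∀ e : Equiv.Perm κ, ν.map (fun v => v ∘ e) = ν) {k : ℕ}
    (hk : k ≤ Fintype.card κ) (m : κ) :
    (k : ℝ≥0∞) * ν univ ≤ Fintype.card κ * ν {v | strictRank v m < k} := by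
  classical
  set A : κ → Set (κ → ℝ) := fun m => {v | strictRank v m < k}
  have hA : ∀ m', ν (A m') = ν (A m) := fun m' => by
    have hpre : (fun v : κ → ℝ => v ∘ Equiv.swap m m') ⁻¹' A m' = A m := by
      ext v
      simp [A, strictRank_comp_perm]
    rw [← hpre, ← Measure.map_apply (by fun_prop) (measurableSet_strictRank_lt m' k), hν]
  have hcount : ∀ v, (k : ℝ≥0∞) ≤ ∑ m', (A m').indicator 1 v := fun v => by
    simp only [A, Set.indicator_apply, Set.mem_ofPred_eq, Pi.one_apply, Finset.sum_boole]
    exact_mod_cast le_card_strictRank_lt v hk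
  calc (k : ℝ≥0∞) * ν univ = ∫⁻ _, (k : ℝ≥0∞) ∂ν := (lintegral_const _).symm
    _ ≤ ∫⁻ v, ∑ m', (A m').indicator 1 v ∂ν := lintegral_mono hcount
    _ = ∑ m', ν (A m') := by
      rw [lintegral_finsetSum _ fun m' _ =>
        measurable_one.indicator (measurableSet_strictRank_lt m' k)]
      simp only [lintegral_indicator_one (measurableSet_strictRank_lt _ k)]
      rfl
    _ = Fintype.card κ * ν (A m) := by
      simp only [hA, Finset.sum_const, Finset.card_univ, nsmul_eq_mul]

lemma MeasureTheory.Measure.pi_map_comp_perm {κ β : Type*} [Fintype κ] [MeasurableSpace β]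
    (μ : Measure β) [SigmaFinite μ] (e : Equiv.Perm κ) :
    (Measure.pi fun _ : κ => μ).map (fun v => v ∘ e) = Measure.pi fun _ => μ := by
  have he : (fun v : κ → β => v ∘ e) = MeasurableEquiv.piCongrLeft (fun _ => β) e.symm := by
    funext v j
    simpa using (MeasurableEquiv.piCongrLeft_apply_apply (β := fun _ => β) e.symm v (e j)).symm
  rw [he]
  exact Measure.pi_map_piCongrLeft e.symm fun _ => μ

lemma ProbabilityTheory.iIndepFun.map_eq_pi_of_identDistrib {Ω κ β : Type*}
    [MeasurableSpace Ω] [MeasurableSpace β] [Fintype κ] {P : Measure Ω} {X : κ → Ω → β}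
    (hindep : iIndepFun X P) {j₀ : κ} (hident : ∀ j, IdentDistrib (X j) (X j₀) P P) :
    P.map (fun ω j => X j ω) = Measure.pi fun _ => P.map (X j₀) := by
  rw [hindep.map_fun_eq_pi_map fun j => (hident j).aemeasurable_fst]
  simp only [fun j => (hident j).map_eq]

lemma natCast_le_mul_measure_strictRank_lt_of_iid {Ω κ : Type*} [MeasurableSpace Ω]
    [Fintype κ] {P : Measure Ω} [IsProbabilityMeasure P] {W : κ → Ω → ℝ}
    (hindep : iIndepFun W P) {j₀ : κ} (hident : ∀ j, IdentDistrib (W j) (W j₀) P P) {k : ℕ}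
    (hk : k ≤ Fintype.card κ) (m : κ) :
    (k : ℝ≥0∞) ≤ Fintype.card κ * P {ω | strictRank (fun j => W j ω) m < k} := by
  have hW : AEMeasurable (fun ω j => W j ω) P :=
    aemeasurable_pi_lambda _ fun j => (hident j).aemeasurable_fst
  have : IsProbabilityMeasure (P.map fun ω j => W j ω) := Measure.isProbabilityMeasure_map hW
  have hrank := natCast_mul_le_mul_measure_strictRank_lt (ν := P.map fun ω j => W j ω)
    (fun e => by rw [hindep.map_eq_pi_of_identDistrib hident]; exact Measure.pi_map_comp_perm _ e)
    hk m
  rwa [measure_univ, mul_one, Measure.map_apply_of_aemeasurable hW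
    (measurableSet_strictRank_lt m k)] at hrank

section StepDownThreshold

variable {f : ℝ → ℝ} {δ t : ℝ}

noncomputable def stepDownThreshold (f : ℝ → ℝ) (δ : ℝ) : ℝ :=
  sInf {lam : ℝ | 0 < lam ∧ ∀ lam' ≥ lam, f lam' ≤ δ}

lemma stepDownThreshold_nonneg : 0 ≤ stepDownThreshold f δ :=
  Real.sInf_nonneg fun _ h => h.1.le

/-- `f` is constant on some `[t, t + ε)`, and that interval reaches above an element of the set. -/
lemma apply_le_of_stepDownThreshold_le (hf : ∀ t, ∀ᶠ u in 𝓝[≥] t, f u = f t)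
    (hev : ∀ᶠ u in atTop, f u ≤ δ) (ht : stepDownThreshold f δ ≤ t) : f t ≤ δ := by
  have hne : {lam : ℝ | 0 < lam ∧ ∀ lam' ≥ lam, f lam' ≤ δ}.Nonempty := by
    obtain ⟨L, hL⟩ := eventually_atTop.1 hev
    exact ⟨max L 1, by positivity, fun u hu => hL u ((le_max_left L 1).trans hu)⟩
  obtain ⟨u, hfu, htu⟩ :=
    ((hf t).filter_mono (nhdsWithin_mono t Ioi_subset_Ici_self)).and self_mem_nhdsWithin |>.exists
  obtain ⟨a, ha, hau⟩ := (csInf_lt_iff ⟨0, fun _ h => h.1.le⟩ hne).1 (ht.trans_lt htu)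
  rw [← hfu]
  exact ha.2 u hau.le

lemma stepDownThreshold_le_iff (hf : ∀ t, ∀ᶠ u in 𝓝[≥] t, f u = f t)
    (hev : ∀ᶠ u in atTop, f u ≤ δ) :
    stepDownThreshold f δ ≤ t ↔ 0 ≤ t ∧ ∀ u > t, f u ≤ δ := by
  refine ⟨fun h => ⟨stepDownThreshold_nonneg.trans h,
    fun u hu => apply_le_of_stepDownThreshold_le hf hev (h.trans hu.le)⟩, ?_⟩
  rintro ⟨ht, h⟩
  exact le_of_forall_gt_imp_ge_of_dense fun u hu =>
    csInf_le ⟨0, fun _ h => h.1.le⟩ ⟨ht.trans_lt hu, fun _ hu' => h _ (hu.trans_le hu')⟩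

lemma forall_gt_apply_le_iff_forall_rat (hf : ∀ t, ∀ᶠ u in 𝓝[≥] t, f u = f t) :
    (∀ u > t, f u ≤ δ) ↔ ∀ q : ℚ, t < q → f q ≤ δ := by
  refine ⟨fun h q hq => h q hq, fun h u hu => ?_⟩
  obtain ⟨b, hub, hb⟩ := mem_nhdsGT_iff_exists_Ioo_subset.1
    ((hf u).filter_mono (nhdsWithin_mono u Ioi_subset_Ici_self))
  obtain ⟨q, huq, hqb⟩ := exists_rat_btwn (mem_Ioi.1 hub)
  rw [← (hb ⟨huq, hqb⟩ : f q = f u)]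
  exact h q (hu.trans huq)

lemma measurable_stepDownThreshold {α : Type*} [MeasurableSpace α] {F : α → ℝ → ℝ}
    (hF : ∀ q, Measurable fun z => F z q) (hf : ∀ z t, ∀ᶠ u in 𝓝[≥] t, F z u = F z t)
    (hev : ∀ z, ∀ᶠ u in atTop, F z u ≤ δ) :
    Measurable fun z => stepDownThreshold (F z) δ := by
  refine measurable_of_Iic fun t => ?_
  have hpre : (fun z => stepDownThreshold (F z) δ) ⁻¹' Iic t =
      {_z | 0 ≤ t} ∩ ⋂ q : ℚ, ⋂ (_ : t < (q : ℝ)), {z | F z q ≤ δ} := by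
    ext z
    simp [stepDownThreshold_le_iff (hf z) (hev z), forall_gt_apply_le_iff_forall_rat (hf z)]
  rw [hpre]
  exact (MeasurableSet.const _).inter
    (.iInter fun q => .iInter fun _ => measurableSet_le (hF q) measurable_const)

end StepDownThreshold

lemma measurable_natCard_subtype {α ι : Type*} [MeasurableSpace α] [Fintype ι]
    {p : ι → α → Prop} (hp : ∀ i, MeasurableSet {z | p i z}) :
    Measurable fun z => Nat.card {i // p i z} := by
  classical
  simp only [Nat.card_eq_fintype_card, Fintype.card_subtype, Finset.card_filter]
  exact Finset.measurable_sum _ fun i _ => Measurable.ite (hp i) measurable_const measurable_const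

section FPP

variable {𝒳 𝒴 ι : Type*} [Fintype ι] (φ : ι → 𝒴 → ℝ) (s : ι → 𝒳 → ℝ)

lemma fpp_eventually_nhdsGE_eq (z : 𝒳 × 𝒴 × Finset ι) (t : ℝ) :
    ∀ᶠ u in 𝓝[≥] t, fpp φ s z u = fpp φ s z t := by
  filter_upwards [eventually_all.2 fun i => eventually_nhdsGE_lt_iff t (-(φ i z.2.1) * s i z.1),
    eventually_all.2 fun i => eventually_nhdsGE_lt_iff t |s i z.1|] with u hwrong hanswered
  simp only [fpp, hwrong, hanswered]

lemma fpp_eventually_atTop_eq_zero (z : 𝒳 × 𝒴 × Finset ι) :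
    ∀ᶠ u in atTop, fpp φ s z u = 0 := by
  filter_upwards [eventually_all.2 fun i => eventually_ge_atTop (-(φ i z.2.1) * s i z.1)]
    with u hu
  have : IsEmpty {i // i ∈ z.2.2 ∧ u < -(φ i z.2.1) * s i z.1} :=
    ⟨fun i => (hu i).not_gt i.2.2⟩
  rw [fpp, Nat.card_of_isEmpty, Nat.cast_zero, zero_div]

lemma measurable_fpp [MeasurableSpace 𝒳] [MeasurableSpace 𝒴] [MeasurableSpace (Finset ι)]
    [MeasurableSingletonClass (Finset ι)] (hφ : ∀ i, Measurable (φ i))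
    (hs : ∀ i, Measurable (s i)) (t : ℝ) :
    Measurable fun z : 𝒳 × 𝒴 × Finset ι => fpp φ s z t := by
  have hmem : ∀ i, MeasurableSet {z : 𝒳 × 𝒴 × Finset ι | i ∈ z.2.2} := fun i =>
    measurable_snd.snd (MeasurableSet.of_discrete (s := {I : Finset ι | i ∈ I}))
  have hwrong := measurable_natCard_subtype
    (p := fun i (z : 𝒳 × 𝒴 × Finset ι) => i ∈ z.2.2 ∧ t < -(φ i z.2.1) * s i z.1)
    fun i => (hmem i).inter <| measurableSet_lt measurable_const
        (((hφ i).comp measurable_snd.fst).neg.mul ((hs i).comp measurable_fst))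
  have hanswered := measurable_natCard_subtype
    (p := fun i (z : 𝒳 × 𝒴 × Finset ι) => i ∈ z.2.2 ∧ t < |s i z.1|)
    fun i => (hmem i).inter <| measurableSet_lt measurable_const ((hs i).comp measurable_fst).abs
  exact (measurable_of_countable _ |>.comp hwrong).div
    (measurable_const.max (measurable_of_countable _ |>.comp hanswered))

end FPP

lemma apply_last_le_kthSmallest_castSucc {n k : ℕ} (v : Fin (n + 1) → ℝ) (hk1 : 1 ≤ k)
    (hkn : k ≤ n) (hv : strictRank v (Fin.last n) < k) :
    v (Fin.last n) ≤ kthSmallest (fun j : Fin n => v j.castSucc) k := by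
  by_contra! hlt
  have hcal := le_card_le_kthSmallest (fun j : Fin n => v j.castSucc) hk1 hkn
  have hle : Nat.card {j : Fin n // v j.castSucc ≤ kthSmallest (fun j => v j.castSucc) k} ≤
      strictRank v (Fin.last n) := by
    rw [strictRank, ← Fintype.card_subtype, ← Nat.card_eq_fintype_card]
    exact Nat.card_le_card_of_injective (fun j => ⟨j.1.castSucc, j.2.trans_lt hlt⟩)
      fun a b h => Subtype.ext (Fin.castSucc_injective _ (congrArg Subtype.val h))
  omega

lemma le_toReal_of_natCeil_mul_le {a : ℝ} {N : ℕ} (hN : 0 < N) {p : ℝ≥0∞} (hp : p ≠ ∞)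
    (h : (⌈a * N⌉₊ : ℝ≥0∞) ≤ N * p) : a ≤ p.toReal := by
  have hreal : (⌈a * N⌉₊ : ℝ) ≤ N * p.toReal := by
    simpa [ENNReal.toReal_mul] using ENNReal.toReal_mono (by finiteness) h
  rw [← mul_le_mul_iff_left₀ (Nat.cast_pos.2 hN)]
  exact (Nat.le_ceil _).trans (by linarith)

theorem step_down_conformal_validity_general
    {Ω : Type*} [MeasurableSpace Ω] (P : Measure Ω) [IsProbabilityMeasure P]
    {𝒳 𝒴 ι : Type*} [MeasurableSpace 𝒳] [MeasurableSpace 𝒴] [Fintype ι]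
    [MeasurableSpace (Finset ι)] [MeasurableSingletonClass (Finset ι)]
    (φ : ι → 𝒴 → ℝ)
    (hφmeas : ∀ i, Measurable (φ i))
    (s : ι → 𝒳 → ℝ) (hsmeas : ∀ i, Measurable (s i))
    (n : ℕ)
    -- the i.i.d. sample `(X_j, Y_j, I_j)` for `j = 1, …, n+1`
    (Z : Fin (n + 1) → Ω → 𝒳 × 𝒴 × Finset ι)
    (hindep : iIndepFun Z P)
    (hident : ∀ j, IdentDistrib (Z j) (Z 0) P P)
    (δ : ℝ) (hδ : 0 ≤ δ)
    (α : ℝ) (hα : α ∈ Set.Ioo (0 : ℝ) 1)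
    (hk : ⌈(1 - α) * (n + 1 : ℝ)⌉₊ ≤ n)
    -- the step-down nonconformity scores on the calibration sample
    (S : Ω → Fin n → ℝ)
    (hS : ∀ ω j, S ω j =
      sInf {lam : ℝ | 0 < lam ∧ ∀ lam' ≥ lam, fpp φ s (Z j.castSucc ω) lam' ≤ δ})
    -- the calibrated threshold: the `⌈(1-α)(n+1)⌉`-th smallest score
    (lamhat : Ω → ℝ)
    (hlamhat : ∀ ω, lamhat ω = kthSmallest (S ω) ⌈(1 - α) * (n + 1 : ℝ)⌉₊) :
    1 - α ≤ (P {ω | fpp φ s (Z (Fin.last n) ω) (lamhat ω) ≤ δ}).toReal := by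
  set k := ⌈(1 - α) * (n + 1 : ℝ)⌉₊
  have hk1 : 1 ≤ k := Nat.ceil_pos.2 (mul_pos (sub_pos.2 hα.2) n.cast_add_one_pos)
  have hev : ∀ z, ∀ᶠ u in atTop, fpp φ s z u ≤ δ := fun z =>
    (fpp_eventually_atTop_eq_zero φ s z).mono fun _ hu => hu ▸ hδ
  set τ := fun z => stepDownThreshold (fpp φ s z) δ
  have hτ : Measurable τ := measurable_stepDownThreshold (measurable_fpp φ s hφmeas hsmeas)
    (fpp_eventually_nhdsGE_eq φ s) hev
  have hrank := natCast_le_mul_measure_strictRank_lt_of_iid (hindep.comp _ fun _ => hτ)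
    (fun j => (hident j).comp hτ) (k := k) (by simpa using hk.trans n.le_succ) (Fin.last n)
  have hsub : {ω | strictRank (fun j => τ (Z j ω)) (Fin.last n) < k} ⊆
      {ω | fpp φ s (Z (Fin.last n) ω) (lamhat ω) ≤ δ} := fun ω hω => by
    refine apply_le_of_stepDownThreshold_le (fpp_eventually_nhdsGE_eq φ s _) (hev _) ?_
    rw [hlamhat, show S ω = fun j => τ (Z j.castSucc ω) from funext (hS ω)]
    exact apply_last_le_kthSmallest_castSucc _ hk1 hk hω
  refine le_toReal_of_natCeil_mul_le n.succ_pos (by finiteness) ?_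
  push_cast
  simpa using hrank.trans (mul_le_mul_right (measure_mono hsub) _)

/-- Step-down probe-based conformalization controls the `(1-α)`-value-at-risk of the
FPP loss at level `δ`. -/
theorem step_down_conformal_validity
    {Ω : Type*} [MeasurableSpace Ω] (P : Measure Ω) [IsProbabilityMeasure P]
    {𝒳 𝒴 ι : Type*} [MeasurableSpace 𝒳] [MeasurableSpace 𝒴] [Fintype ι] [Nonempty ι]
    [MeasurableSpace (Finset ι)] [MeasurableSingletonClass (Finset ι)]
    (φ : ι → 𝒴 → ℝ) (hφ : ∀ i y, φ i y = 1 ∨ φ i y = -1)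
    (hφmeas : ∀ i, Measurable (φ i))
    (s : ι → 𝒳 → ℝ) (hsmeas : ∀ i, Measurable (s i))
    (n : ℕ)
    -- the i.i.d. sample `(X_j, Y_j, I_j)` for `j = 1, …, n+1`
    (Z : Fin (n + 1) → Ω → 𝒳 × 𝒴 × Finset ι)
    (hZmeas : ∀ j, Measurable (Z j))
    (hindep : iIndepFun Z P)
    (hident : ∀ j, IdentDistrib (Z j) (Z 0) P P)
    (δ : ℝ) (hδ : 0 ≤ δ)
    (α : ℝ) (hα : α ∈ Set.Ioo (0 : ℝ) 1)
    (hk : ⌈(1 - α) * (n + 1 : ℝ)⌉₊ ≤ n)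
    -- the step-down nonconformity scores on the calibration sample
    (S : Ω → Fin n → ℝ)
    (hS : ∀ ω j, S ω j =
      sInf {lam : ℝ | 0 < lam ∧ ∀ lam' ≥ lam, fpp φ s (Z j.castSucc ω) lam' ≤ δ})
    -- the calibrated threshold: the `⌈(1-α)(n+1)⌉`-th smallest score
    (lamhat : Ω → ℝ)
    (hlamhat : ∀ ω, lamhat ω = kthSmallest (S ω) ⌈(1 - α) * (n + 1 : ℝ)⌉₊) :
    1 - α ≤ (P {ω | fpp φ s (Z (Fin.last n) ω) (lamhat ω) ≤ δ}).toReal :=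
  step_down_conformal_validity_general P φ hφmeas s hsmeas n Z hindep hident δ hδ α hα hk S hS
    lamhat hlamhat
end

section
/- Fix δ ∈ (0,1), α_FST ∈ (0,1), and a finite grid 0 < λ_1 < ⋯ < λ_N. Define the risk r(λ) := E[ L(X, Y, I, λ) ], where (X, Y, I) has the common distribution of the sample, and for each k ∈ {1,…,N} let the null hypothesis be H_k : r(λ_k) > δ. Suppose p_1, …, p_N are random variables, each a measurable function of the calibration sample (X_1, Y_1, I_1), …, (X_n, Y_n, I_n), such that whenever H_k holds, ℙ(p_k ≤ u) ≤ u for all u ∈ [0,1]. Let k̂ := min{k : p_{k'} ≤ α_FST for all k' ≥ k} (with k̂ := N+1 if no such k exists). Then ℙ( k̂ ≤ N and r(λ_{k̂}) > δ ) ≤ α_FST; equivalently, with probability at least 1 − α_FST over the calibration sample, either the procedure abstains or the returned predictive set mapping Ĉ_n = C^s_{λ_{k̂}} satisfies E[ L(X_{n+1}, Y_{n+1}, I_{n+1}, λ_{k̂}) | k̂ ] ≤ δ. -/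
open MeasureTheory ProbabilityTheory Set
open scoped Classical

/-!
Let `K` be the largest index in `1, …, N` whose null hypothesis is true. Fixed sequence testing
can select a true null `k̂ ≤ K` only after rejecting every hypothesis from `k̂` to `N`, in
particular `H_K`. The bad event therefore lies inside `{p_K ≤ α}`, which has probability at
most `α` by validity of `p_K`; if there is no true null, the bad event is empty.
-/

lemma fixedSequence_index_spec {Ω : Type*} {N : ℕ} {α : ℝ} {p : ℕ → Ω → ℝ} {ω : Ω} {k : ℕ}
    (hk : k = if ({k : ℕ | 1 ≤ k ∧ k ≤ N ∧ ∀ k', k ≤ k' → k' ≤ N → p k' ω ≤ α}).Nonempty then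
        sInf {k : ℕ | 1 ≤ k ∧ k ≤ N ∧ ∀ k', k ≤ k' → k' ≤ N → p k' ω ≤ α}
      else N + 1)
    (hkN : k ≤ N) : 1 ≤ k ∧ ∀ k', k ≤ k' → k' ≤ N → p k' ω ≤ α := by
  split_ifs at hk with hne
  · obtain ⟨hk1, -, hrej⟩ := hk ▸ Nat.sInf_mem hne
    exact ⟨hk1, hrej⟩
  · omega

theorem measure_fixedSequence_selects_null_le {Ω : Type*} [MeasurableSpace Ω]
    (P : Measure Ω) [IsFiniteMeasure P]
    (H : ℕ → Prop) {N : ℕ} {α : ℝ} (hα : 0 ≤ α) (p : ℕ → Ω → ℝ)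
    (hvalid : ∀ k, 1 ≤ k → k ≤ N → H k → (P {ω | p k ω ≤ α}).toReal ≤ α)
    (khat : Ω → ℕ)
    (hsel : ∀ ω, khat ω ≤ N → 1 ≤ khat ω ∧ ∀ k, khat ω ≤ k → k ≤ N → p k ω ≤ α) :
    (P {ω | khat ω ≤ N ∧ H (khat ω)}).toReal ≤ α := by
  set nulls : Set ℕ := {k | 1 ≤ k ∧ k ≤ N ∧ H k}
  have hbdd : BddAbove nulls := ⟨N, fun _ hk => hk.2.1⟩
  rcases nulls.eq_empty_or_nonempty with hempty | hne
  · have hbad : {ω | khat ω ≤ N ∧ H (khat ω)} = ∅ :=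
      eq_empty_of_forall_notMem fun ω ⟨hN, hH⟩ =>
        hempty.subset ⟨(hsel ω hN).1, hN, hH⟩
    simp [hbad, hα]
  · obtain ⟨hK1, hKN, hKnull⟩ : sSup nulls ∈ nulls := Nat.sSup_mem hne hbdd
    have hsub : {ω | khat ω ≤ N ∧ H (khat ω)} ⊆ {ω | p (sSup nulls) ω ≤ α} :=
      fun ω ⟨hN, hH⟩ =>
        (hsel ω hN).2 _ (le_csSup hbdd ⟨(hsel ω hN).1, hN, hH⟩) hKN
    calc (P {ω | khat ω ≤ N ∧ H (khat ω)}).toReal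
        ≤ (P {ω | p (sSup nulls) ω ≤ α}).toReal :=
          ENNReal.toReal_mono (measure_ne_top _ _) (measure_mono hsub)
      _ ≤ α := hvalid _ hK1 hKN hKnull

theorem fixed_sequence_testing_risk_control_general
    {Ω : Type*} [MeasurableSpace Ω] (P : Measure Ω) [IsProbabilityMeasure P]
    (δ : ℝ)
    (αFST : ℝ) (hαFST : αFST ∈ Set.Ioo (0 : ℝ) 1)
    -- the finite grid `0 < λ_1 < ⋯ < λ_N`
    (N : ℕ) (lam : ℕ → ℝ)
    -- the risk `r(λ) = E[L(X, Y, I, λ)]` under the common distribution of the sample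
    (r : ℝ → ℝ)
    -- p-values, each a measurable function of the calibration sample
    (p : ℕ → Ω → ℝ)
    -- validity: whenever `H_k : r(λ_k) > δ` holds, `p_k` is a valid p-value
    (hpvalid : ∀ k, 1 ≤ k → k ≤ N → δ < r (lam k) →
      ∀ u ∈ Set.Icc (0 : ℝ) 1, (P {ω | p k ω ≤ u}).toReal ≤ u)
    -- the fixed-sequence-testing selection, with the convention `k̂ = N + 1` when no
    -- index qualifies
    (khat : Ω → ℕ)
    (hkhat : ∀ ω, khat ω =
      if ({k : ℕ | 1 ≤ k ∧ k ≤ N ∧ ∀ k', k ≤ k' → k' ≤ N → p k' ω ≤ αFST}).Nonempty then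
        sInf {k : ℕ | 1 ≤ k ∧ k ≤ N ∧ ∀ k', k ≤ k' → k' ≤ N → p k' ω ≤ αFST}
      else N + 1) :
    (P {ω | khat ω ≤ N ∧ δ < r (lam (khat ω))}).toReal ≤ αFST :=
  measure_fixedSequence_selects_null_le P (fun k => δ < r (lam k)) hαFST.1.le p
    (fun k hk1 hkN hnull => hpvalid k hk1 hkN hnull αFST ⟨hαFST.1.le, hαFST.2.le⟩)
    khat (fun ω => fixedSequence_index_spec (hkhat ω))

/-- Fixed sequence testing for weakly supervised predictive inference: with probability at
least `1 - α_FST`, either the procedure abstains (`k̂ = N+1`) or the selected threshold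
`λ_{k̂}` has expected FPP loss at most `δ` on a fresh sample. -/
theorem fixed_sequence_testing_risk_control
    {Ω : Type*} [MeasurableSpace Ω] (P : Measure Ω) [IsProbabilityMeasure P]
    {𝒳 𝒴 ι : Type*} [MeasurableSpace 𝒳] [MeasurableSpace 𝒴] [Fintype ι] [Nonempty ι]
    [MeasurableSpace (Finset ι)] [MeasurableSingletonClass (Finset ι)]
    (φ : ι → 𝒴 → ℝ) (hφ : ∀ i y, φ i y = 1 ∨ φ i y = -1)
    (hφmeas : ∀ i, Measurable (φ i))
    (s : ι → 𝒳 → ℝ) (hsmeas : ∀ i, Measurable (s i))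
    (n : ℕ)
    -- the i.i.d. sample `(X_j, Y_j, I_j)` for `j = 1, …, n+1`
    (Z : Fin (n + 1) → Ω → 𝒳 × 𝒴 × Finset ι)
    (hZmeas : ∀ j, Measurable (Z j))
    (hindep : iIndepFun Z P)
    (hident : ∀ j, IdentDistrib (Z j) (Z 0) P P)
    (δ : ℝ) (hδ : δ ∈ Set.Ioo (0 : ℝ) 1)
    (αFST : ℝ) (hαFST : αFST ∈ Set.Ioo (0 : ℝ) 1)
    -- the finite grid `0 < λ_1 < ⋯ < λ_N`
    (N : ℕ) (hN : 1 ≤ N) (lam : ℕ → ℝ) (hlam1 : 0 < lam 1)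
    (hlammono : ∀ k, 1 ≤ k → k + 1 ≤ N → lam k < lam (k + 1))
    -- the risk `r(λ) = E[L(X, Y, I, λ)]` under the common distribution of the sample
    (r : ℝ → ℝ)
    (hr : ∀ l, r l = ∫ ω, fpp φ s (Z (Fin.last n) ω) l ∂P)
    -- p-values, each a measurable function of the calibration sample
    (p : ℕ → Ω → ℝ)
    (hpmeas : ∀ k, 1 ≤ k → k ≤ N →
      Measurable[MeasurableSpace.comap (fun ω (j : Fin n) => Z j.castSucc ω) inferInstance]
        (p k))
    -- validity: whenever `H_k : r(λ_k) > δ` holds, `p_k` is a valid p-value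
    (hpvalid : ∀ k, 1 ≤ k → k ≤ N → δ < r (lam k) →
      ∀ u ∈ Set.Icc (0 : ℝ) 1, (P {ω | p k ω ≤ u}).toReal ≤ u)
    -- the fixed-sequence-testing selection, with the convention `k̂ = N + 1` when no
    -- index qualifies
    (khat : Ω → ℕ)
    (hkhat : ∀ ω, khat ω =
      if ({k : ℕ | 1 ≤ k ∧ k ≤ N ∧ ∀ k', k ≤ k' → k' ≤ N → p k' ω ≤ αFST}).Nonempty then
        sInf {k : ℕ | 1 ≤ k ∧ k ≤ N ∧ ∀ k', k ≤ k' → k' ≤ N → p k' ω ≤ αFST}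
      else N + 1) :
    (P {ω | khat ω ≤ N ∧ δ < r (lam (khat ω))}).toReal ≤ αFST :=
  fixed_sequence_testing_risk_control_general P δ αFST hαFST N lam r p hpvalid khat hkhat
end

section
/- (Hoeffding component of the Hoeffding–Bentkus p-value) Suppose μ > δ. Then p^H := exp(−n·h(min(L̄, δ), δ)) is a valid p-value for the hypothesis H : μ > δ, i.e. for every u ∈ [0,1], ℙ( p^H ≤ u ) ≤ u. -/
/-!
The Chernoff bound for a sum of independent `[0, 1]`-valued variables with means at least `δ`,
optimised over the exponent, gives `ℙ(L̄ ≤ t) ≤ exp(-n h(t, δ))` for `t ≤ δ`; so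
`ℙ(L̄ ≤ t) ≤ φ(t) := exp(-n h(min(t, δ), δ))` for every `t ∈ [0, 1]`. For any statistic `X` with
`ℙ(X ≤ t) ≤ φ(t)` and `φ` continuous, `φ(X)` is a valid p-value: the event `φ(X) ≤ u` is contained
in `X ≤ t` for the largest `t` with `φ(t) ≤ u`.
-/

open MeasureTheory ProbabilityTheory Set

/-- The relative entropy `h(a, b) = a log(a/b) + (1-a) log((1-a)/(1-b))` between Bernoulli
distributions with parameters `a` and `b` (with the conventions `h(0,b) = log(1/(1-b))`
and `h(1,b) = log(1/b)`, automatic here since `Real.log 0 = 0`). -/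
noncomputable def bernoulliKL (a b : ℝ) : ℝ :=
  a * Real.log (a / b) + (1 - a) * Real.log ((1 - a) / (1 - b))

open Real Filter Topology

section PValue

variable {α Ω : Type*} [LinearOrder α] [TopologicalSpace α] [OrderClosedTopology α]
  [MeasurableSpace Ω] {P : Measure Ω} [IsFiniteMeasure P]

lemma measureReal_comp_le_le_of_measureReal_le_le {X : Ω → α} {φ : α → ℝ} {s : Set α}
    (hs : IsCompact s) (hXs : ∀ ω, X ω ∈ s) (hφ : ContinuousOn φ s)
    (htail : ∀ t ∈ s, P.real {ω | X ω ≤ t} ≤ φ t) {u : ℝ} (hu : 0 ≤ u) :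
    P.real {ω | φ (X ω) ≤ u} ≤ u := by
  set S := s ∩ φ ⁻¹' Iic u
  have hS : IsCompact S :=
    hs.of_isClosed_subset (hφ.preimage_isClosed_of_isClosed hs.isClosed isClosed_Iic)
      inter_subset_left
  rcases S.eq_empty_or_nonempty with hempty | hne
  · have hevent : {ω | φ (X ω) ≤ u} = ∅ :=
      eq_empty_of_forall_notMem fun ω hω => hempty.subset ⟨hXs ω, hω⟩
    simpa [hevent] using hu
  obtain ⟨t, ⟨hts, hφt⟩, hmax⟩ := hS.exists_isGreatest hne
  calc P.real {ω | φ (X ω) ≤ u} ≤ P.real {ω | X ω ≤ t} :=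
        measureReal_mono fun ω hω => hmax ⟨hXs ω, hω⟩
    _ ≤ φ t := htail t hts
    _ ≤ u := hφt

end PValue

section BernoulliKL

lemma continuous_bernoulliKL_left {b : ℝ} (hb0 : b ≠ 0) (hb1 : b ≠ 1) :
    Continuous fun a => bernoulliKL a b := by
  have hcont (c : ℝ) (hc : c ≠ 0) : Continuous fun x : ℝ => x * log (x / c) := by
    have hscale : (fun x : ℝ => x * log (x / c)) = fun x => c * (x / c * log (x / c)) := by
      funext x; field_simp
    rw [hscale]
    exact continuous_const.mul (continuous_mul_log.comp (continuous_id.div_const c))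
  exact (hcont b hb0).add
    ((hcont (1 - b) (sub_ne_zero.2 hb1.symm)).comp (continuous_const.sub continuous_id))

lemma bernoulliKL_self (b : ℝ) : bernoulliKL b b = 0 := by
  rcases eq_or_ne b 0 with rfl | hb0
  · simp [bernoulliKL]
  rcases eq_or_ne b 1 with rfl | hb1
  · simp [bernoulliKL]
  simp [bernoulliKL, div_self hb0, div_self (sub_ne_zero.2 hb1.symm)]

lemma exp_neg_bernoulliKL_zero {b : ℝ} (hb : b < 1) : exp (-bernoulliKL 0 b) = 1 - b := by
  simp [bernoulliKL, log_inv, exp_log (sub_pos.2 hb)]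

lemma exists_nonpos_exp_mul_eq_exp_neg_bernoulliKL {t δ : ℝ} (ht : 0 < t) (htδ : t ≤ δ)
    (hδ : δ < 1) : ∃ l ≤ 0, exp (-l * t) * (1 - δ + δ * exp l) = exp (-bernoulliKL t δ) := by
  have hδ0 : 0 < δ := ht.trans_le htδ
  have ht1 : t < 1 := htδ.trans_lt hδ
  -- the minimiser of `l ↦ exp (-l t) (1 - δ + δ eˡ)`
  refine ⟨log (t / δ) - log ((1 - t) / (1 - δ)), ?_, ?_⟩
  · have h1 : log (t / δ) ≤ 0 := log_nonpos (by positivity) ((div_le_one hδ0).2 htδ)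
    have h2 : 0 ≤ log ((1 - t) / (1 - δ)) :=
      log_nonneg ((one_le_div (by linarith)).2 (by linarith))
    linarith
  · have hmgf : 1 - δ + δ * exp (log (t / δ) - log ((1 - t) / (1 - δ))) =
        exp (-log ((1 - t) / (1 - δ))) := by
      rw [exp_sub, exp_neg, exp_log (by positivity),
        exp_log (div_pos (by linarith) (by linarith))]
      field_simp [sub_ne_zero.2 ht1.ne']
      ring
    rw [hmgf, ← exp_add, bernoulliKL]
    congr 1
    ring

lemma le_exp_neg_bernoulliKL_of_forall_nonpos {c t δ : ℝ} {n : ℕ} (ht : 0 ≤ t) (htδ : t ≤ δ)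
    (hδ : δ < 1) (hc : ∀ l ≤ 0, c ≤ (exp (-l * t) * (1 - δ + δ * exp l)) ^ n) :
    c ≤ exp (-bernoulliKL t δ) ^ n := by
  rcases ht.eq_or_lt with rfl | ht
  · have hlim : Tendsto (fun l => (exp (-l * 0) * (1 - δ + δ * exp l)) ^ n) atBot
        (𝓝 (exp (-bernoulliKL 0 δ) ^ n)) := by
      rw [exp_neg_bernoulliKL_zero hδ]
      simpa using ((tendsto_const_nhds (x := 1 - δ)).add
        (tendsto_exp_atBot.const_mul δ)).pow n
    exact ge_of_tendsto hlim (eventually_atBot.2 ⟨0, hc⟩)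
  · obtain ⟨l, hl, heq⟩ := exists_nonpos_exp_mul_eq_exp_neg_bernoulliKL ht htδ hδ
    exact heq ▸ hc l hl

end BernoulliKL

section Hoeffding

variable {Ω ι : Type*} [MeasurableSpace Ω] {P : Measure Ω}

lemma exp_mul_le_one_sub_add_mul_exp {x : ℝ} (hx : x ∈ Icc (0 : ℝ) 1) (l : ℝ) :
    exp (l * x) ≤ 1 - x + x * exp l := by
  have := convexOn_exp.2 (mem_univ 0) (mem_univ l) (sub_nonneg.2 hx.2) hx.1 (by ring)
  simpa [mul_comm l x] using this

lemma mgf_le_of_mem_Icc_zero_one [IsProbabilityMeasure P] {X : Ω → ℝ} (hm : AEMeasurable X P)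
    (hb : ∀ᵐ ω ∂P, X ω ∈ Icc (0 : ℝ) 1) (l : ℝ) : mgf X P l ≤ 1 - P[X] + P[X] * exp l := by
  have hX : Integrable X P := .of_mem_Icc 0 1 hm hb
  have hX' : Integrable (fun ω => 1 - X ω) P := (integrable_const 1).sub hX
  calc mgf X P l = ∫ ω, exp (l * X ω) ∂P := rfl
    _ ≤ ∫ ω, (1 - X ω + X ω * exp l) ∂P :=
        integral_mono_ae (integrable_exp_mul_of_mem_Icc hm hb)
          (hX'.add (hX.mul_const _))
          (hb.mono fun ω hω => exp_mul_le_one_sub_add_mul_exp hω l)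
    _ = 1 - P[X] + P[X] * exp l := by
        rw [integral_add hX' (hX.mul_const _),
          integral_sub (integrable_const 1) hX, integral_mul_const]
        simp

variable [Fintype ι] {L : ι → Ω → ℝ} {δ : ℝ}

lemma mgf_sum_le_pow_of_mem_Icc_zero_one (hindep : iIndepFun L P)
    (hm : ∀ j, AEMeasurable (L j) P) (hb : ∀ j, ∀ᵐ ω ∂P, L j ω ∈ Icc (0 : ℝ) 1)
    (hmean : ∀ j, δ ≤ P[L j]) {l : ℝ} (hl : l ≤ 0) :
    mgf (∑ j, L j) P l ≤ (1 - δ + δ * exp l) ^ Fintype.card ι := by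
  have := hindep.isProbabilityMeasure
  rw [hindep.mgf_sum₀ hm, ← Finset.card_univ, ← Finset.prod_const]
  refine Finset.prod_le_prod (fun j _ => mgf_nonneg) fun j _ =>
    (mgf_le_of_mem_Icc_zero_one (hm j) (hb j) l).trans ?_
  have := exp_le_one_iff.2 hl
  nlinarith [hmean j]

theorem measureReal_sum_le_le_exp_neg_bernoulliKL (hindep : iIndepFun L P)
    (hm : ∀ j, AEMeasurable (L j) P) (hb : ∀ j, ∀ᵐ ω ∂P, L j ω ∈ Icc (0 : ℝ) 1)
    (hmean : ∀ j, δ ≤ P[L j]) {t : ℝ} (ht : 0 ≤ t) (htδ : t ≤ δ) (hδ : δ < 1) :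
    P.real {ω | ∑ j, L j ω ≤ Fintype.card ι * t} ≤
      exp (-Fintype.card ι * bernoulliKL t δ) := by
  have := hindep.isProbabilityMeasure
  set n := Fintype.card ι
  have hsum : ∀ᵐ ω ∂P, ∑ j, L j ω ∈ Icc (0 : ℝ) n := by
    filter_upwards [ae_all_iff.2 hb] with ω hω
    exact ⟨Finset.sum_nonneg fun j _ => (hω j).1,
      by simpa [n] using Finset.sum_le_sum fun j (_ : j ∈ Finset.univ) => (hω j).2⟩
  rw [neg_mul, ← mul_neg, exp_nat_mul]
  refine le_exp_neg_bernoulliKL_of_forall_nonpos ht htδ hδ fun l hl => ?_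
  calc P.real {ω | ∑ j, L j ω ≤ n * t}
      ≤ exp (-l * (n * t)) * mgf (fun ω => ∑ j, L j ω) P l :=
        measure_le_le_exp_mul_mgf _ hl
          (integrable_exp_mul_of_mem_Icc (Finset.aemeasurable_fun_sum _ fun j _ => hm j) hsum)
    _ ≤ exp (-l * (n * t)) * (1 - δ + δ * exp l) ^ n := by
        gcongr
        simpa [Finset.sum_fn] using mgf_sum_le_pow_of_mem_Icc_zero_one hindep hm hb hmean hl
    _ = (exp (-l * t) * (1 - δ + δ * exp l)) ^ n := by
        rw [mul_pow, ← exp_nat_mul]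
        ring_nf

end Hoeffding

/-- The Hoeffding component `p^H = exp(−n·h(L̄ ∧ δ, δ))` of the Hoeffding–Bentkus p-value
is a valid p-value for the hypothesis `H : μ > δ`. -/
theorem hoeffding_p_value_valid
    {Ω : Type*} [MeasurableSpace Ω] (P : Measure Ω) [IsProbabilityMeasure P]
    (n : ℕ) (hn : 1 ≤ n)
    (L : Fin n → Ω → ℝ)
    (hLmeas : ∀ j, Measurable (L j))
    (hL01 : ∀ j ω, L j ω ∈ Set.Icc (0 : ℝ) 1)
    (hindep : iIndepFun L P)
    (hident : ∀ j, IdentDistrib (L j) (L ⟨0, hn⟩) P P)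
    (μ : ℝ) (hμ : μ = ∫ ω, L ⟨0, hn⟩ ω ∂P)
    (δ : ℝ) (hδ : δ ∈ Set.Ioo (0 : ℝ) 1)
    (hμδ : δ < μ)
    (Lbar : Ω → ℝ) (hLbar : ∀ ω, Lbar ω = (1 / n : ℝ) * ∑ j, L j ω)
    (pH : Ω → ℝ)
    (hpH : ∀ ω, pH ω = Real.exp (-(n : ℝ) * bernoulliKL (min (Lbar ω) δ) δ)) :
    ∀ u ∈ Set.Icc (0 : ℝ) 1, (P {ω | pH ω ≤ u}).toReal ≤ u := by
  intro u hu
  have hn0 : (0 : ℝ) < n := by exact_mod_cast hn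
  have hmean (j : Fin n) : δ ≤ ∫ ω, L j ω ∂P := by
    rw [(hident j).integral_eq, ← hμ]
    exact hμδ.le
  have hLbar_le (ω : Ω) (t : ℝ) : Lbar ω ≤ t ↔ ∑ j, L j ω ≤ n * t := by
    rw [hLbar, one_div, inv_mul_le_iff₀ hn0]
  have hLbar_mem (ω : Ω) : Lbar ω ∈ Icc (0 : ℝ) 1 := by
    refine ⟨?_, (hLbar_le ω 1).2 ?_⟩
    · rw [hLbar]
      exact mul_nonneg (by positivity) (Finset.sum_nonneg fun j _ => (hL01 j ω).1)
    · simpa using Finset.sum_le_sum fun j (_ : j ∈ Finset.univ) => (hL01 j ω).2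
  have htail : ∀ t ∈ Icc (0 : ℝ) 1,
      P.real {ω | Lbar ω ≤ t} ≤ exp (-n * bernoulliKL (min t δ) δ) := by
    intro t ht
    rcases le_total t δ with htδ | hδt
    · simp_rw [hLbar_le, min_eq_left htδ]
      simpa using measureReal_sum_le_le_exp_neg_bernoulliKL hindep
        (fun j => (hLmeas j).aemeasurable) (fun j => ae_of_all _ (hL01 j)) hmean ht.1 htδ hδ.2
    · simp [min_eq_right hδt, bernoulliKL_self]
  have hφ : Continuous fun t => exp (-n * bernoulliKL (min t δ) δ) := by
    have := continuous_bernoulliKL_left hδ.1.ne' hδ.2.ne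
    fun_prop
  simp_rw [hpH]
  exact measureReal_comp_le_le_of_measureReal_le_le isCompact_Icc hLbar_mem hφ.continuousOn
    htail hu.1
end

section
/- (Bentkus component of the Hoeffding–Bentkus p-value) Suppose μ > δ. Then p^B := e·ℙ(Bin(n,δ) ≤ ⌈n·L̄⌉) is a valid p-value for the hypothesis H : μ > δ, i.e. for every u ∈ [0,1], ℙ( p^B ≤ u ) ≤ u. -/
open MeasureTheory ProbabilityTheory Set

/-- `ℙ(Bin(n, δ) ≤ m)`, the cumulative distribution function of a Binomial(n, δ) random
variable evaluated at `m`. -/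
noncomputable def binomCDF (n : ℕ) (δ : ℝ) (m : ℕ) : ℝ :=
  ∑ k ∈ Finset.range (m + 1), (n.choose k : ℝ) * δ ^ k * (1 - δ) ^ (n - k)

/-!
For `h : ℕ` the function `x ↦ (h - x)₊` is convex, so on `[0, 1]` it lies below its chord; hence
replacing one `L_j` by an independent Bernoulli(δ) variable (δ ≤ its mean) can only increase
`𝔼 (h - ∑ L_j)₊`. Doing this for every `j` gives `𝔼 (h - nL̄)₊ ≤ 𝔼 (h - B)₊ = ∑_{i<h} F(i)`, where
`B ~ Bin(n, δ)` has CDF `F`, and Markov's inequality with `h = m + N` gives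
`N ℙ(nL̄ ≤ m) ≤ ∑_{i<m+N} F(i)`. Since `F` is log-concave, `F(i) ≤ F(m) ρ^(i-m)` with
`ρ = F(m+1)/F(m)`, and summing this geometric envelope with `N = ⌈1/(ρ-1)⌉` bounds the right side
by `e N F(m)`. So `ℙ(nL̄ ≤ m) ≤ e F(m)` for every `m`, and inverting the monotone map
`m ↦ e F(m)` shows that `p^B` is a valid p-value.
-/

open Real in
lemma exists_pow_le_exp_one_mul {ρ : ℝ} (hρ : 1 < ρ) :
    ∃ N : ℕ, 1 ≤ N ∧ ρ ^ N ≤ exp 1 * (N * (ρ - 1)) := by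
  set a := ρ - 1
  have ha : 0 < a := sub_pos.mpr hρ
  refine ⟨⌈1 / a⌉₊, Nat.ceil_pos.mpr (by positivity), ?_⟩
  set N := ⌈1 / a⌉₊
  have hs0 : 0 ≤ (N : ℝ) - 1 / a := sub_nonneg.mpr (Nat.le_ceil _)
  have hs1 : (N : ℝ) - 1 / a ≤ 1 := by linarith [Nat.ceil_lt_add_one (one_div_pos.mpr ha).le]
  have hρ_eq : ρ = 1 + a := by ring
  have hfrac : ρ ^ ((N : ℝ) - 1 / a) ≤ N * a := by
    calc ρ ^ ((N : ℝ) - 1 / a) = (1 + a) ^ ((N : ℝ) - 1 / a) := by rw [← hρ_eq]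
      _ ≤ 1 + ((N : ℝ) - 1 / a) * a := rpow_one_add_le_one_add_mul_self (by linarith) hs0 hs1
      _ = N * a := by field_simp; ring
  have hint : ρ ^ (1 / a) ≤ exp 1 := by
    rw [rpow_def_of_pos (by linarith), exp_le_exp, mul_one_div, div_le_one ha]
    exact log_le_sub_one_of_pos (by linarith)
  calc ρ ^ N = ρ ^ ((N : ℝ) - 1 / a) * ρ ^ (1 / a) := by
        rw [← rpow_add (by linarith), sub_add_cancel, rpow_natCast]
    _ ≤ N * a * exp 1 := mul_le_mul hfrac hint (by positivity) (by positivity)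
    _ = exp 1 * (N * a) := by ring

section Sequences

open Finset

variable {f : ℕ → ℝ} {ρ : ℝ} {m : ℕ}

/-- The hypotheses say that `b` is the law of `B + ξ` where `B ~ a` and `ξ ~ Bernoulli(q)` are
independent; the conclusion is the same relation between their CDFs. -/
lemma sum_range_succ_eq_of_bernoulli_step {a b : ℕ → ℝ} {q : ℝ} (h0 : b 0 = (1 - q) * a 0)
    (hsucc : ∀ i, b (i + 1) = q * a i + (1 - q) * a (i + 1)) (k : ℕ) :
    ∑ i ∈ range (k + 1), b i = q * ∑ i ∈ range k, a i + (1 - q) * ∑ i ∈ range (k + 1), a i := by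
  rw [sum_range_succ' b, sum_range_succ' a]
  simp only [hsucc, h0]
  rw [sum_add_distrib, ← mul_sum, ← mul_sum]
  ring

lemma sum_range_mul_sum_range_le_sq {p : ℕ → ℝ} (hp : ∀ i, 0 ≤ p i)
    (hlc : ∀ j k, j ≤ k → p j * p (k + 2) ≤ p (j + 1) * p (k + 1)) (k : ℕ) :
    (∑ i ∈ range (k + 1), p i) * ∑ i ∈ range (k + 3), p i ≤ (∑ i ∈ range (k + 2), p i) ^ 2 := by
  set S := fun l => ∑ i ∈ range (l + 1), p i
  have hshift : S k * p (k + 2) ≤ S (k + 1) * p (k + 1) := calc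
    _ = ∑ j ∈ range (k + 1), p j * p (k + 2) := sum_mul ..
    _ ≤ ∑ j ∈ range (k + 1), p (j + 1) * p (k + 1) :=
      sum_le_sum fun j hj => hlc j k (Nat.lt_succ_iff.mp (mem_range.mp hj))
    _ ≤ S (k + 1) * p (k + 1) := by
      rw [← sum_mul, show S (k + 1) = _ from sum_range_succ' p (k + 1)]
      nlinarith [hp 0, hp (k + 1)]
  have h1 : S (k + 1) = S k + p (k + 1) := sum_range_succ ..
  have h2 : S (k + 2) = S (k + 1) + p (k + 2) := sum_range_succ ..
  change S k * S (k + 2) ≤ S (k + 1) ^ 2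
  have hsq : S (k + 1) ^ 2 = S (k + 1) * S k + S (k + 1) * p (k + 1) := by rw [sq, ← mul_add, ← h1]
  rw [h2, hsq]
  linarith

lemma antitone_ratio_of_mul_le_sq (hpos : ∀ k, 0 < f k)
    (hlc : ∀ k, f k * f (k + 2) ≤ f (k + 1) ^ 2) : Antitone fun k => f (k + 1) / f k := by
  refine antitone_nat_of_succ_le fun k => ?_
  rw [div_le_div_iff₀ (hpos _) (hpos _)]
  nlinarith [hlc k]

/-- `f i / ρ ^ i` increases up to `i = m` and decreases afterwards. -/
lemma mul_pow_le_mul_pow_of_ratio (hρ : 0 < ρ) (hup : ∀ k, m ≤ k → f (k + 1) ≤ ρ * f k)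
    (hdown : ∀ k < m, ρ * f k ≤ f (k + 1)) (i : ℕ) : f i * ρ ^ m ≤ f m * ρ ^ i := by
  rcases le_total m i with hmi | him
  · induction i, hmi using Nat.le_induction with
    | base => rfl
    | succ i hi ih => calc
        f (i + 1) * ρ ^ m ≤ ρ * f i * ρ ^ m := by gcongr; exact hup i hi
        _ = ρ * (f i * ρ ^ m) := by ring
        _ ≤ ρ * (f m * ρ ^ i) := by gcongr
        _ = f m * ρ ^ (i + 1) := by ring
  · induction him using Nat.decreasingInduction with
    | self => rfl
    | of_succ i hi ih =>
      refine le_of_mul_le_mul_left ?_ hρ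
      calc ρ * (f i * ρ ^ m) = ρ * f i * ρ ^ m := by ring
        _ ≤ f (i + 1) * ρ ^ m := by gcongr; exact hdown i hi
        _ ≤ f m * ρ ^ (i + 1) := ih
        _ = ρ * (f m * ρ ^ i) := by ring

lemma sum_range_mul_sub_one_le_mul_pow (hρ : 1 < ρ) (hfm : 0 ≤ f m)
    (hup : ∀ k, m ≤ k → f (k + 1) ≤ ρ * f k) (hdown : ∀ k < m, ρ * f k ≤ f (k + 1)) (N : ℕ) :
    (∑ i ∈ range (m + N), f i) * (ρ - 1) ≤ f m * ρ ^ N := by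
  have hρ0 : 0 < ρ := by linarith
  refine le_of_mul_le_mul_right ?_ (pow_pos hρ0 m)
  calc (∑ i ∈ range (m + N), f i) * (ρ - 1) * ρ ^ m
      = (∑ i ∈ range (m + N), f i * ρ ^ m) * (ρ - 1) := by rw [← sum_mul]; ring
    _ ≤ (∑ i ∈ range (m + N), f m * ρ ^ i) * (ρ - 1) := mul_le_mul_of_nonneg_right
      (sum_le_sum fun i _ => mul_pow_le_mul_pow_of_ratio hρ0 hup hdown i) (by linarith)
    _ = f m * (ρ ^ (m + N) - 1) := by rw [← mul_sum, mul_assoc, geom_sum_mul]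
    _ ≤ f m * ρ ^ N * ρ ^ m := by
      rw [mul_assoc, ← pow_add, add_comm N]
      exact mul_le_mul_of_nonneg_left (by linarith) hfm

end Sequences

lemma Nat.choose_mul_choose_le {n j k : ℕ} (hjk : j ≤ k) :
    n.choose j * n.choose (k + 2) ≤ n.choose (j + 1) * n.choose (k + 1) := by
  refine Nat.le_of_mul_le_mul_right (c := (j + 1) * (k + 2)) ?_ (by positivity)
  calc n.choose j * n.choose (k + 2) * ((j + 1) * (k + 2))
      = n.choose j * (n.choose (k + 1 + 1) * (k + 1 + 1)) * (j + 1) := by ring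
    _ = n.choose j * n.choose (k + 1) * ((n - (k + 1)) * (j + 1)) := by
        rw [Nat.choose_succ_right_eq]; ring
    _ ≤ n.choose j * n.choose (k + 1) * ((n - j) * (k + 2)) :=
        Nat.mul_le_mul_left _ (Nat.mul_le_mul (by omega) (by omega))
    _ = n.choose j * (n - j) * n.choose (k + 1) * (k + 2) := by ring
    _ = n.choose (j + 1) * n.choose (k + 1) * ((j + 1) * (k + 2)) := by
        rw [← Nat.choose_succ_right_eq]; ring

noncomputable def binomPMF (n : ℕ) (q : ℝ) (k : ℕ) : ℝ :=
  (n.choose k : ℝ) * q ^ k * (1 - q) ^ (n - k)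

lemma binomCDF_eq_sum_binomPMF (n : ℕ) (q : ℝ) (m : ℕ) :
    binomCDF n q m = ∑ k ∈ Finset.range (m + 1), binomPMF n q k := rfl

section binomPMF

variable {n : ℕ} {q : ℝ}

lemma binomPMF_nonneg (hq0 : 0 ≤ q) (hq1 : q ≤ 1) (k : ℕ) : 0 ≤ binomPMF n q k := by
  have : 0 ≤ 1 - q := by linarith
  unfold binomPMF
  positivity

lemma binomPMF_pos (hq0 : 0 < q) (hq1 : q < 1) {k : ℕ} (hk : k ≤ n) : 0 < binomPMF n q k := by
  have : 0 < 1 - q := by linarith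
  have := Nat.choose_pos hk
  unfold binomPMF
  positivity

lemma binomPMF_eq_zero_of_lt {k : ℕ} (hk : n < k) : binomPMF n q k = 0 := by
  simp [binomPMF, Nat.choose_eq_zero_of_lt hk]

lemma binomPMF_zero : binomPMF n q 0 = (1 - q) ^ n := by
  simp [binomPMF]

lemma binomPMF_succ_succ (k : ℕ) :
    binomPMF (n + 1) q (k + 1) = q * binomPMF n q k + (1 - q) * binomPMF n q (k + 1) := by
  rcases lt_or_ge k n with hk | hk
  · obtain ⟨d, rfl⟩ := Nat.exists_eq_add_of_lt hk
    simp only [binomPMF, Nat.choose_succ_succ, Nat.cast_add,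
      show k + d + 1 + 1 - (k + 1) = d + 1 by omega, show k + d + 1 - k = d + 1 by omega,
      show k + d + 1 - (k + 1) = d by omega]
    ring
  · rw [binomPMF_eq_zero_of_lt (Nat.lt_succ_of_le hk)]
    simp only [binomPMF, Nat.choose_succ_succ, Nat.choose_eq_zero_of_lt (Nat.lt_succ_of_le hk),
      Nat.cast_add, Nat.succ_sub_succ]
    ring

lemma binomPMF_mul_le (hq0 : 0 ≤ q) (hq1 : q ≤ 1) {j k : ℕ} (hjk : j ≤ k) :
    binomPMF n q j * binomPMF n q (k + 2) ≤ binomPMF n q (j + 1) * binomPMF n q (k + 1) := by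
  rcases lt_or_ge n (k + 2) with hn | hn
  · rw [binomPMF_eq_zero_of_lt hn, mul_zero]
    exact mul_nonneg (binomPMF_nonneg hq0 hq1 _) (binomPMF_nonneg hq0 hq1 _)
  have hchoose : (n.choose j * n.choose (k + 2) : ℝ) ≤ n.choose (j + 1) * n.choose (k + 1) := by
    exact_mod_cast Nat.choose_mul_choose_le hjk
  have : 0 ≤ 1 - q := by linarith
  obtain ⟨d, rfl⟩ := Nat.exists_eq_add_of_le hn
  simp only [binomPMF, show k + 2 + d - j = (k - j) + 2 + d by omega,
    show k + 2 + d - (k + 2) = d by omega, show k + 2 + d - (j + 1) = (k - j) + 1 + d by omega,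
    show k + 2 + d - (k + 1) = d + 1 by omega]
  have key := mul_le_mul_of_nonneg_right hchoose
    (by positivity : (0 : ℝ) ≤ q ^ (j + k + 2) * (1 - q) ^ ((k - j) + 2 + 2 * d))
  exact (le_of_eq (by ring)).trans (key.trans_eq (by ring))

end binomPMF

section binomCDF

variable {n : ℕ} {q : ℝ}

lemma binomCDF_succ (m : ℕ) : binomCDF n q (m + 1) = binomCDF n q m + binomPMF n q (m + 1) :=
  Finset.sum_range_succ ..

lemma binomCDF_pos (hq0 : 0 ≤ q) (hq1 : q < 1) (m : ℕ) : 0 < binomCDF n q m := by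
  rw [binomCDF_eq_sum_binomPMF, Finset.sum_range_succ']
  have : 0 < binomPMF n q 0 := by rw [binomPMF_zero]; exact pow_pos (by linarith) n
  have := Finset.sum_nonneg fun i (_ : i ∈ Finset.range m) =>
    binomPMF_nonneg (n := n) hq0 hq1.le (i + 1)
  linarith

lemma binomCDF_mono (hq0 : 0 ≤ q) (hq1 : q ≤ 1) : Monotone (binomCDF n q) :=
  monotone_nat_of_le_succ fun m => by
    rw [binomCDF_succ]; linarith [binomPMF_nonneg (n := n) hq0 hq1 (m + 1)]

lemma binomCDF_lt_succ (hq0 : 0 < q) (hq1 : q < 1) {m : ℕ} (hm : m < n) :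
    binomCDF n q m < binomCDF n q (m + 1) := by
  rw [binomCDF_succ]
  linarith [binomPMF_pos hq0 hq1 hm]

lemma binomCDF_eq_one {m : ℕ} (hm : n ≤ m) : binomCDF n q m = 1 := by
  induction m, hm using Nat.le_induction with
  | base =>
    have h := add_pow q (1 - q) n
    rw [add_sub_cancel, one_pow] at h
    exact (Finset.sum_congr rfl fun k _ => by ring).trans h.symm
  | succ m hm ih => rw [binomCDF_succ, ih, binomPMF_eq_zero_of_lt (by omega), add_zero]

lemma binomCDF_mul_le (hq0 : 0 ≤ q) (hq1 : q ≤ 1) (k : ℕ) :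
    binomCDF n q k * binomCDF n q (k + 2) ≤ binomCDF n q (k + 1) ^ 2 :=
  sum_range_mul_sum_range_le_sq (binomPMF_nonneg hq0 hq1) (fun _ _ => binomPMF_mul_le hq0 hq1) k

lemma binomCDF_succ_zero : binomCDF (n + 1) q 0 = (1 - q) * binomCDF n q 0 := by
  simp [binomCDF_eq_sum_binomPMF, binomPMF_zero, pow_succ, mul_comm]

lemma binomCDF_succ_succ (m : ℕ) :
    binomCDF (n + 1) q (m + 1) = q * binomCDF n q m + (1 - q) * binomCDF n q (m + 1) :=
  sum_range_succ_eq_of_bernoulli_step (by simp [binomPMF_zero, pow_succ, mul_comm])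
    binomPMF_succ_succ (m + 1)

end binomCDF

/-- Equals `𝔼[(t - Bin(c, q))₊]`. -/
noncomputable def binomCDFSum (c : ℕ) (q : ℝ) (t : ℕ) : ℝ :=
  ∑ i ∈ Finset.range t, binomCDF c q i

section binomCDFSum

variable {n : ℕ} {q : ℝ}

lemma binomCDFSum_succ_succ (t : ℕ) :
    binomCDFSum (n + 1) q (t + 1) = q * binomCDFSum n q t + (1 - q) * binomCDFSum n q (t + 1) :=
  sum_range_succ_eq_of_bernoulli_step binomCDF_succ_zero binomCDF_succ_succ t

lemma exists_binomCDFSum_le (hq0 : 0 < q) (hq1 : q < 1) {m : ℕ} (hm : m < n) :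
    ∃ N : ℕ, 1 ≤ N ∧ binomCDFSum n q (m + N) ≤ Real.exp 1 * N * binomCDF n q m := by
  set F := binomCDF n q
  have hF : ∀ k, 0 < F k := binomCDF_pos hq0.le hq1
  set ρ := F (m + 1) / F m
  have hρ : 1 < ρ := (one_lt_div (hF m)).mpr (binomCDF_lt_succ hq0 hq1 hm)
  have hratio := antitone_ratio_of_mul_le_sq hF (binomCDF_mul_le hq0.le hq1.le)
  have hup : ∀ k, m ≤ k → F (k + 1) ≤ ρ * F k := fun k hk =>
    (div_le_iff₀ (hF k)).mp (hratio hk)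
  have hdown : ∀ k < m, ρ * F k ≤ F (k + 1) := fun k hk =>
    (le_div_iff₀ (hF k)).mp (hratio hk.le)
  obtain ⟨N, hN1, hN⟩ := exists_pow_le_exp_one_mul hρ
  refine ⟨N, hN1, le_of_mul_le_mul_right ?_ (sub_pos.mpr hρ)⟩
  calc binomCDFSum n q (m + N) * (ρ - 1) ≤ F m * ρ ^ N :=
        sum_range_mul_sub_one_le_mul_pow hρ (hF m).le hup hdown N
    _ ≤ F m * (Real.exp 1 * (N * (ρ - 1))) := mul_le_mul_of_nonneg_left hN (hF m).le
    _ = Real.exp 1 * N * F m * (ρ - 1) := by ring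

end binomCDFSum

lemma max_sub_le_of_mem_Icc (a : ℝ) {x : ℝ} (hx : x ∈ Icc 0 1) :
    max (a - x) 0 ≤ (1 - x) * max a 0 + x * max (a - 1) 0 := by
  obtain ⟨hx0, hx1⟩ := hx
  have h1 := mul_nonneg (sub_nonneg.mpr hx1) (sub_nonneg.mpr (le_max_left a 0))
  have h2 := mul_nonneg hx0 (sub_nonneg.mpr (le_max_left (a - 1) 0))
  refine max_le (by linarith) (add_nonneg ?_ ?_) <;>
    exact mul_nonneg (by linarith) (le_max_right _ _)

section Comparison

variable {Ω : Type*} [MeasurableSpace Ω] {P : Measure Ω} [IsProbabilityMeasure P]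

lemma integrable_max_sub {T : Ω → ℝ} (hT : Measurable T) (hT0 : ∀ ω, 0 ≤ T ω) (h : ℝ) :
    Integrable (fun ω => max (h - T ω) 0) P := by
  refine .of_bound ((hT.const_sub h).max measurable_const).aestronglyMeasurable (max h 0)
    (ae_of_all _ fun ω => ?_)
  rw [Real.norm_of_nonneg (le_max_right _ _)]
  exact max_le_max (by linarith [hT0 ω]) le_rfl

lemma integral_max_sub_add_le {T X : Ω → ℝ} (hT : Measurable T) (hX : Measurable X)
    (hT0 : ∀ ω, 0 ≤ T ω) (hX01 : ∀ ω, X ω ∈ Icc 0 1) (hind : IndepFun T X P) {q : ℝ}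
    (hq : q ≤ ∫ ω, X ω ∂P) (h : ℝ) :
    ∫ ω, max (h - (T ω + X ω)) 0 ∂P ≤
      (1 - q) * ∫ ω, max (h - T ω) 0 ∂P + q * ∫ ω, max (h - 1 - T ω) 0 ∂P := by
  have hXbound : ∀ᵐ ω ∂P, ‖X ω‖ ≤ 1 := ae_of_all _ fun ω => by
    rw [Real.norm_of_nonneg (hX01 ω).1]; exact (hX01 ω).2
  have hmul : ∀ c, ∫ ω, X ω * max (c - T ω) 0 ∂P = (∫ ω, X ω ∂P) * ∫ ω, max (c - T ω) 0 ∂P :=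
    fun c => (hind.symm.comp measurable_id (by fun_prop : Measurable fun t => max (c - t) 0))
      |>.integral_fun_mul_eq_mul_integral hX.aestronglyMeasurable
        ((hT.const_sub c).max measurable_const).aestronglyMeasurable
  have hA := integrable_max_sub (P := P) hT hT0 h
  have hB := integrable_max_sub (P := P) hT hT0 (h - 1)
  have hXA := hA.bdd_mul hX.aestronglyMeasurable hXbound
  have hXB := hB.bdd_mul hX.aestronglyMeasurable hXbound
  have hBA : ∫ ω, max (h - 1 - T ω) 0 ∂P ≤ ∫ ω, max (h - T ω) 0 ∂P :=
    integral_mono hB hA fun ω => max_le_max (by linarith) le_rfl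
  calc ∫ ω, max (h - (T ω + X ω)) 0 ∂P
      ≤ ∫ ω, (max (h - T ω) 0 - X ω * max (h - T ω) 0 + X ω * max (h - 1 - T ω) 0) ∂P := by
        refine integral_mono
          (integrable_max_sub (hT.add hX) (fun ω => add_nonneg (hT0 ω) (hX01 ω).1) h)
          ((hA.sub hXA).add hXB) fun ω => ?_
        have := max_sub_le_of_mem_Icc (h - T ω) (hX01 ω)
        rw [sub_sub, sub_right_comm] at this
        linarith
    _ = (1 - ∫ ω, X ω ∂P) * ∫ ω, max (h - T ω) 0 ∂P
          + (∫ ω, X ω ∂P) * ∫ ω, max (h - 1 - T ω) 0 ∂P := by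
        rw [integral_add (by exact hA.sub hXA) hXB, integral_sub hA hXA, hmul, hmul]
        ring
    _ ≤ (1 - q) * ∫ ω, max (h - T ω) 0 ∂P + q * ∫ ω, max (h - 1 - T ω) 0 ∂P := by
        nlinarith

lemma integral_max_sub_sum_le_binomCDFSum {ι : Type*} [DecidableEq ι] {L : ι → Ω → ℝ}
    (hLmeas : ∀ j, Measurable (L j)) (hL01 : ∀ j ω, L j ω ∈ Icc 0 1) (hindep : iIndepFun L P)
    {q : ℝ} (hq0 : 0 ≤ q) (hq1 : q ≤ 1) (hq : ∀ j, q ≤ ∫ ω, L j ω ∂P) (s : Finset ι) (t : ℕ) :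
    ∫ ω, max (t - ∑ j ∈ s, L j ω) 0 ∂P ≤ binomCDFSum s.card q t := by
  induction s using Finset.induction_on generalizing t with
  | empty => simp [binomCDFSum, binomCDF_eq_one]
  | insert i s hi ih =>
    cases t with
    | zero =>
      refine integral_nonpos fun ω => max_le ?_ le_rfl
      simpa using Finset.sum_nonneg fun j _ => (hL01 j ω).1
    | succ t =>
      have hS0 : ∀ ω, 0 ≤ ∑ j ∈ s, L j ω := fun ω => Finset.sum_nonneg fun j _ => (hL01 j ω).1
      have hind := hindep.indepFun_finsetSum_of_notMem hLmeas hi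
      rw [Finset.sum_fn] at hind
      have step := integral_max_sub_add_le (Finset.measurable_sum s fun j _ => hLmeas j) (hLmeas i)
        hS0 (hL01 i) hind (hq i) (t + 1)
      simp only [Finset.sum_insert hi, add_comm (L i _), Nat.cast_succ, add_sub_cancel_right]
        at step ⊢
      rw [Finset.card_insert_of_notMem hi, binomCDFSum_succ_succ]
      have ih1 := ih (t + 1)
      push_cast at ih1
      calc _ ≤ _ := step
        _ ≤ (1 - q) * binomCDFSum s.card q (t + 1) + q * binomCDFSum s.card q t :=
          add_le_add (mul_le_mul_of_nonneg_left ih1 (by linarith))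
            (mul_le_mul_of_nonneg_left (ih t) hq0)
        _ = _ := by ring

theorem measureReal_sum_le_le_exp_one_mul_binomCDF {ι : Type*} [Fintype ι] {L : ι → Ω → ℝ}
    (hLmeas : ∀ j, Measurable (L j)) (hL01 : ∀ j ω, L j ω ∈ Icc 0 1) (hindep : iIndepFun L P)
    {q : ℝ} (hq : q ∈ Ioo 0 1) (hqL : ∀ j, q ≤ ∫ ω, L j ω ∂P) (m : ℕ) :
    P.real {ω | ∑ j, L j ω ≤ m} ≤ Real.exp 1 * binomCDF (Fintype.card ι) q m := by
  classical
  rcases lt_or_ge m (Fintype.card ι) with hm | hm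
  · obtain ⟨N, hN1, hN⟩ := exists_binomCDFSum_le hq.1 hq.2 hm
    have hS0 : ∀ ω, 0 ≤ ∑ j, L j ω := fun ω => Finset.sum_nonneg fun j _ => (hL01 j ω).1
    have hsub : {ω | ∑ j, L j ω ≤ m} ⊆ {ω | (N : ℝ) ≤ max ((m + N : ℕ) - ∑ j, L j ω) 0} :=
      fun ω (hω : ∑ j, L j ω ≤ m) => show (N : ℝ) ≤ max _ 0 from
        le_max_of_le_left (by push_cast; linarith)
    have hmarkov : N * P.real {ω | ∑ j, L j ω ≤ m} ≤ ∫ ω, max ((m + N : ℕ) - ∑ j, L j ω) 0 ∂P :=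
      (mul_le_mul_of_nonneg_left (measureReal_mono hsub) N.cast_nonneg).trans
        (mul_meas_ge_le_integral_of_nonneg (ae_of_all _ fun _ => le_max_right _ _)
          (integrable_max_sub (Finset.measurable_sum _ fun j _ => hLmeas j) hS0 _) _)
    have hcomp := integral_max_sub_sum_le_binomCDFSum hLmeas hL01 hindep hq.1.le hq.2.le hqL
      Finset.univ (m + N)
    rw [Finset.card_univ] at hcomp
    have hN0 : (0 : ℝ) < N := by exact_mod_cast hN1
    refine le_of_mul_le_mul_left ?_ hN0
    linarith
  · rw [binomCDF_eq_one hm, mul_one]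
    exact measureReal_le_one.trans (Real.one_le_exp zero_le_one)

end Comparison

lemma measureReal_comp_le_le_of_monotone {Ω : Type*} [MeasurableSpace Ω] {P : Measure Ω}
    [IsFiniteMeasure P] {T : Ω → ℕ} {g : ℕ → ℝ} (hg : Monotone g)
    (hT : ∀ m, P.real {ω | T ω ≤ m} ≤ g m) {u : ℝ} (hu : 0 ≤ u) {M : ℕ} (hM : u < g M) :
    P.real {ω | g (T ω) ≤ u} ≤ u := by
  rcases Set.eq_empty_or_nonempty {ω | g (T ω) ≤ u} with hempty | ⟨ω₀, hω₀⟩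
  · simpa [hempty] using hu
  have hle : ∀ k, g k ≤ u → k ≤ M := fun k hk => (hg.reflect_lt (hk.trans_lt hM)).le
  have hspec : g (Nat.findGreatest (g · ≤ u) M) ≤ u :=
    Nat.findGreatest_spec (P := (g · ≤ u)) (hle _ hω₀) hω₀
  calc P.real {ω | g (T ω) ≤ u} ≤ P.real {ω | T ω ≤ Nat.findGreatest (g · ≤ u) M} :=
        measureReal_mono fun ω hω => Nat.le_findGreatest (hle _ hω) hω
    _ ≤ u := (hT _).trans hspec

/-- The Bentkus component `p^B = e·ℙ(Bin(n,δ) ≤ ⌈n·L̄⌉)` of the Hoeffding–Bentkus p-value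
is a valid p-value for the hypothesis `H : μ > δ`. -/
theorem bentkus_p_value_valid
    {Ω : Type*} [MeasurableSpace Ω] (P : Measure Ω) [IsProbabilityMeasure P]
    (n : ℕ) (hn : 1 ≤ n)
    (L : Fin n → Ω → ℝ)
    (hLmeas : ∀ j, Measurable (L j))
    (hL01 : ∀ j ω, L j ω ∈ Set.Icc (0 : ℝ) 1)
    (hindep : iIndepFun L P)
    (hident : ∀ j, IdentDistrib (L j) (L ⟨0, hn⟩) P P)
    (μ : ℝ) (hμ : μ = ∫ ω, L ⟨0, hn⟩ ω ∂P)
    (δ : ℝ) (hδ : δ ∈ Set.Ioo (0 : ℝ) 1)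
    (hμδ : δ < μ)
    (Lbar : Ω → ℝ) (hLbar : ∀ ω, Lbar ω = (1 / n : ℝ) * ∑ j, L j ω)
    (pB : Ω → ℝ)
    (hpB : ∀ ω, pB ω = Real.exp 1 * binomCDF n δ ⌈(n : ℝ) * Lbar ω⌉₊) :
    ∀ u ∈ Set.Icc (0 : ℝ) 1, (P {ω | pB ω ≤ u}).toReal ≤ u := by
  intro u hu
  have hδL : ∀ j, δ ≤ ∫ ω, L j ω ∂P := fun j => by
    rw [(hident j).integral_eq, ← hμ]; exact hμδ.le
  have hsum : ∀ ω, (n : ℝ) * Lbar ω = ∑ j, L j ω := fun ω => by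
    rw [hLbar, ← mul_assoc, mul_one_div_cancel (by positivity), one_mul]
  have hcdf : ∀ m : ℕ, P.real {ω | ⌈(n : ℝ) * Lbar ω⌉₊ ≤ m} ≤ Real.exp 1 * binomCDF n δ m := by
    intro m
    simpa [Nat.ceil_le, hsum] using
      measureReal_sum_le_le_exp_one_mul_binomCDF hLmeas hL01 hindep hδ hδL m
  have hu_lt : u < Real.exp 1 * binomCDF n δ n := by
    rw [binomCDF_eq_one le_rfl, mul_one]
    exact hu.2.trans_lt (Real.one_lt_exp_iff.mpr one_pos)
  simpa [hpB, measureReal_def] using measureReal_comp_le_le_of_monotone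
    ((binomCDF_mono hδ.1.le hδ.2.le).const_mul (Real.exp_pos 1).le) hcdf hu.1 hu_lt
end

section
/- (Conformal calibration lemma) Let S_1, …, S_{n+1} be i.i.d. real-valued random variables, and let α ∈ (0,1) be such that k := ⌈(1−α)(n+1)⌉ ≤ n. Let λ̂ denote the k-th smallest value among S_1, …, S_n (equivalently, the (1+1/n)(1−α)-empirical quantile of {S_j}_{j=1}^n). Then ℙ( S_{n+1} ≤ λ̂ ) ≥ 1 − α. -/
open MeasureTheory ProbabilityTheory Set

/-!
Pool the calibration scores with the test score `S_{n+1}`. Since `S_{n+1} ≤ λ̂` says exactly that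
fewer than `k` of the scores lie strictly below `S_{n+1}`, and the i.i.d. vector
`(S_1, …, S_{n+1})` is exchangeable, every index `i` has the same probability `p` that fewer than
`k` scores lie strictly below `S_i`. Deterministically at least `k` indices have this property
(those with `S_i` at most the `k`-th smallest of all `n + 1` scores), so summing over `i` gives
`(n + 1) p ≥ k ≥ (1 - α)(n + 1)`.
-/

open Finset (card_le_card card_pos mem_filter)
open scoped Finset ENNReal

theorem Finset.exists_mem_card_le_card_filter_le {ι β : Type*} [Fintype ι] [LinearOrder β]
    (v : ι → β) {s : Finset ι} (hs : s.Nonempty) : ∃ j ∈ s, #s ≤ #{i | v i ≤ v j} := by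
  obtain ⟨j, hj, hmax⟩ := s.exists_max_image v hs
  exact ⟨j, hj, card_le_card fun i hi => by simpa using hmax i hi⟩

theorem card_filter_comp_perm {ι : Type*} [Fintype ι] (σ : Equiv.Perm ι) (p : ι → Prop)
    [DecidablePred p] : #{j | p (σ j)} = #{j | p j} := by
  rw [Finset.card_filter, Finset.card_filter]
  exact Equiv.sum_comp σ fun j => if p j then 1 else 0

section kthSmallest

variable {m : ℕ} (v : Fin m → ℝ) {k : ℕ}

theorem kthSmallest_eq_sInf : kthSmallest v k = sInf {t | k ≤ #{j | v j ≤ t}} := by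
  simp only [kthSmallest, Nat.card_eq_fintype_card, Fintype.card_subtype]

theorem isLeast_kthSmallest (hk : 1 ≤ k) (hkm : k ≤ m) :
    IsLeast {t | k ≤ #{j | v j ≤ t}} (kthSmallest v k) := by
  set T := {t | k ≤ #{j | v j ≤ t}}
  have exists_value_below (t : ℝ) (ht : k ≤ #{j | v j ≤ t}) : ∃ j, v j ∈ T ∧ v j ≤ t := by
    obtain ⟨j, hj, hcard⟩ := Finset.exists_mem_card_le_card_filter_le v
      (s := {j | v j ≤ t}) (card_pos.1 (by omega))
    exact ⟨j, ht.trans hcard, (mem_filter.1 hj).2⟩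
  have hvalues : (Finset.univ.filter fun j => v j ∈ T).Nonempty := by
    obtain ⟨j, -, hj⟩ := Finset.exists_mem_card_le_card_filter_le v
      (Finset.univ_nonempty_iff.2 ⟨⟨0, by omega⟩⟩)
    exact ⟨j, by simpa [T] using hkm.trans (by simpa using hj)⟩
  obtain ⟨j₀, hj₀, hmin⟩ := Finset.exists_min_image _ v hvalues
  have hleast : IsLeast T (v j₀) := by
    refine ⟨(mem_filter.1 hj₀).2, fun t ht => ?_⟩
    obtain ⟨j, hjT, hjt⟩ := exists_value_below t ht
    exact (hmin j (by simpa using hjT)).trans hjt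
  rwa [kthSmallest_eq_sInf, hleast.csInf_eq]

theorem le_kthSmallest_iff (hk : 1 ≤ k) (hkm : k ≤ m) {s : ℝ} :
    s ≤ kthSmallest v k ↔ #{j | v j < s} < k := by
  obtain ⟨hmem, hlower⟩ := isLeast_kthSmallest v hk hkm
  constructor
  · intro hs
    by_contra! hcount
    obtain ⟨j, hj, hcard⟩ := Finset.exists_mem_card_le_card_filter_le v
      (s := {j | v j < s}) (card_pos.1 (by omega))
    have hqj : kthSmallest v k ≤ v j := hlower (hcount.trans hcard)
    linarith [(mem_filter.1 hj).2]
  · intro hcount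
    by_contra! hlt
    have hsub : #{j | v j ≤ kthSmallest v k} ≤ #{j | v j < s} :=
      card_le_card fun j hj => by simpa using (mem_filter.1 hj).2.trans_lt hlt
    have hmem : k ≤ #{j | v j ≤ kthSmallest v k} := hmem
    omega

theorem le_card_filter_card_lt (hkm : k ≤ m) : k ≤ #{i | #{j | v j < v i} < k} := by
  rcases Nat.eq_zero_or_pos k with rfl | hk
  · exact Nat.zero_le _
  calc k ≤ #{i | v i ≤ kthSmallest v k} := (isLeast_kthSmallest v hk hkm).1
    _ = #{i | #{j | v j < v i} < k} := by simp only [le_kthSmallest_iff v hk hkm]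

end kthSmallest

theorem le_kthSmallest_init_iff {n k : ℕ} (x : Fin (n + 1) → ℝ) (hk : 1 ≤ k) (hkn : k ≤ n) :
    x (Fin.last n) ≤ kthSmallest (fun j : Fin n => x j.castSucc) k ↔
      #{j | x j < x (Fin.last n)} < k := by
  rw [le_kthSmallest_iff _ hk hkn, Finset.card_filter, Finset.card_filter, Fin.sum_univ_castSucc]
  simp

open Classical in
theorem natCast_mul_measure_univ_le_sum {α ι : Type*} [MeasurableSpace α] [Fintype ι]
    (μ : Measure α) {A : ι → Set α} (hA : ∀ i, MeasurableSet (A i)) {k : ℕ}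
    (hk : ∀ x, k ≤ #{i | x ∈ A i}) : k * μ univ ≤ ∑ i, μ (A i) :=
  calc k * μ univ = ∫⁻ _, (k : ℝ≥0∞) ∂μ := (lintegral_const _).symm
    _ ≤ ∫⁻ x, ∑ i, (A i).indicator 1 x ∂μ := lintegral_mono fun x => by
      have hx := hk x
      rw [Finset.card_filter] at hx
      simp only [Set.indicator_apply, Pi.one_apply]
      exact_mod_cast hx
    _ = ∑ i, μ (A i) := by
      rw [lintegral_finsetSum _ fun i _ => measurable_one.indicator (hA i)]
      simp only [lintegral_indicator_one (hA _)]

theorem measurePreserving_comp_perm {ι α : Type*} [Fintype ι] [MeasurableSpace α]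
    (μ : Measure α) [SigmaFinite μ] (σ : Equiv.Perm ι) :
    MeasurePreserving (fun x : ι → α => x ∘ σ) (Measure.pi fun _ => μ)
      (Measure.pi fun _ => μ) := by
  convert measurePreserving_piCongrLeft (fun _ : ι => μ) σ.symm using 1
  ext x i
  simp [MeasurableEquiv.coe_piCongrLeft, Equiv.piCongrLeft_apply_eq_cast]

theorem measurableSet_card_filter_lt {ι : Type*} [Fintype ι] (i : ι) (k : ℕ) :
    MeasurableSet {x : ι → ℝ | #{j | x j < x i} < k} := by
  have hcount : Measurable fun x : ι → ℝ => #{j | x j < x i} := by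
    simp only [Finset.card_filter]
    exact Finset.measurable_sum _ fun j _ => Measurable.ite
      (measurableSet_lt (measurable_pi_apply j) (measurable_pi_apply i))
      measurable_const measurable_const
  exact hcount measurableSet_Iio

theorem natCast_le_mul_measure_pi_card_lt {N k : ℕ} (μ : Measure ℝ) [IsProbabilityMeasure μ]
    (hkN : k ≤ N) (i : Fin N) :
    (k : ℝ≥0∞) ≤ N * Measure.pi (fun _ => μ) {x | #{j | x j < x i} < k} := by
  set π := Measure.pi fun _ : Fin N => μ
  have exchangeable (i' : Fin N) :
      π {x | #{j | x j < x i'} < k} = π {x | #{j | x j < x i} < k} := by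
    have hswap : {x : Fin N → ℝ | #{j | x j < x i'} < k} =
        (· ∘ Equiv.swap i i') ⁻¹' {x | #{j | x j < x i} < k} := by
      ext x
      simp [card_filter_comp_perm (Equiv.swap i i') (fun j => x j < x i')]
    rw [hswap, (measurePreserving_comp_perm μ _).measure_preimage
      (measurableSet_card_filter_lt i k).nullMeasurableSet]
  calc (k : ℝ≥0∞) = k * π univ := by simp
    _ ≤ ∑ i', π {x | #{j | x j < x i'} < k} :=
      natCast_mul_measure_univ_le_sum π (fun i' => measurableSet_card_filter_lt i' k)
        fun x => by simpa using le_card_filter_card_lt x hkN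
    _ = N * π {x | #{j | x j < x i} < k} := by simp [exchangeable]

theorem natCast_le_mul_measure_le_kthSmallest {Ω : Type*} [MeasurableSpace Ω] (P : Measure Ω)
    [IsProbabilityMeasure P] {n k : ℕ} (S : Fin (n + 1) → Ω → ℝ) (hindep : iIndepFun S P)
    (hident : ∀ j, IdentDistrib (S j) (S 0) P P) (hk : k ≤ n) :
    (k : ℝ≥0∞) ≤
      (n + 1) * P {ω | S (Fin.last n) ω ≤ kthSmallest (fun j : Fin n => S j.castSucc ω) k} := by
  rcases Nat.eq_zero_or_pos k with rfl | hk1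
  · simp
  have hS (j : Fin (n + 1)) : AEMeasurable (S j) P := (hident j).aemeasurable_fst
  have := Measure.isProbabilityMeasure_map (hS 0)
  have hlaw : P.map (fun ω j => S j ω) = Measure.pi fun _ => P.map (S 0) := by
    simp only [hindep.map_fun_eq_pi_map hS, (hident _).map_eq]
  have hevent :
      {ω | S (Fin.last n) ω ≤ kthSmallest (fun j : Fin n => S j.castSucc ω) k} =
        (fun ω j => S j ω) ⁻¹' {x | #{j | x j < x (Fin.last n)} < k} := by
    ext ω
    exact le_kthSmallest_init_iff (fun j => S j ω) hk1 hk
  rw [hevent, ← Measure.map_apply_of_aemeasurable (aemeasurable_pi_lambda _ hS)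
    (measurableSet_card_filter_lt _ _), hlaw]
  exact_mod_cast natCast_le_mul_measure_pi_card_lt _ (hk.trans n.le_succ) _

theorem conformal_calibration_general
    {Ω : Type*} [MeasurableSpace Ω] (P : Measure Ω) [IsProbabilityMeasure P]
    (n : ℕ)
    (S : Fin (n + 1) → Ω → ℝ)
    (hindep : iIndepFun S P)
    (hident : ∀ j, IdentDistrib (S j) (S 0) P P)
    (α : ℝ)
    (hk : ⌈(1 - α) * (n + 1 : ℝ)⌉₊ ≤ n)
    (lamhat : Ω → ℝ)
    (hlamhat : ∀ ω, lamhat ω =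
      kthSmallest (fun j : Fin n => S j.castSucc ω) ⌈(1 - α) * (n + 1 : ℝ)⌉₊) :
    1 - α ≤ (P {ω | S (Fin.last n) ω ≤ lamhat ω}).toReal := by
  set k := ⌈(1 - α) * (n + 1 : ℝ)⌉₊
  have hcover := natCast_le_mul_measure_le_kthSmallest P S hindep hident hk
  simp_rw [← hlamhat] at hcover
  have hcover_real : (k : ℝ) ≤ (n + 1) * (P {ω | S (Fin.last n) ω ≤ lamhat ω}).toReal := by
    simpa [ENNReal.toReal_add] using ENNReal.toReal_mono (by finiteness) hcover
  have hceil : (1 - α) * (n + 1) ≤ k := Nat.le_ceil _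
  nlinarith

/-- Conformal calibration lemma: if `S_1, …, S_{n+1}` are i.i.d. and `λ̂` is the
`⌈(1-α)(n+1)⌉`-th smallest value among `S_1, …, S_n` (with `⌈(1-α)(n+1)⌉ ≤ n`), then
`ℙ(S_{n+1} ≤ λ̂) ≥ 1 - α`. -/
theorem conformal_calibration
    {Ω : Type*} [MeasurableSpace Ω] (P : Measure Ω) [IsProbabilityMeasure P]
    (n : ℕ)
    (S : Fin (n + 1) → Ω → ℝ)
    (hSmeas : ∀ j, Measurable (S j))
    (hindep : iIndepFun S P)
    (hident : ∀ j, IdentDistrib (S j) (S 0) P P)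
    (α : ℝ) (hα : α ∈ Set.Ioo (0 : ℝ) 1)
    (hk : ⌈(1 - α) * (n + 1 : ℝ)⌉₊ ≤ n)
    (lamhat : Ω → ℝ)
    (hlamhat : ∀ ω, lamhat ω =
      kthSmallest (fun j : Fin n => S j.castSucc ω) ⌈(1 - α) * (n + 1 : ℝ)⌉₊) :
    1 - α ≤ (P {ω | S (Fin.last n) ω ≤ lamhat ω}).toReal :=
  conformal_calibration_general P n S hindep hident α hk lamhat hlamhat
end

section
/- (Correctness of the Bernoulli-sequence threshold) Let N ≥ 1, let 1 ≥ π_1 ≥ π_2 ≥ ⋯ ≥ π_N ≥ 0, and fix δ ∈ (0,1]. Define J* := max{ J ∈ {1,…,N} : (1/J)·∑_{j=1}^J π_j ≥ δ } (with J* := 0 if no such J exists), and set η* := π_{J*+1} if J* < N, and η* := 0 if J* = N. Then η* = inf{ η ∈ [0,1] : (1/max(1, #{j : π_j > η}))·∑_{j : π_j > η} (1 − π_j) ≤ 1 − δ }, where an empty sum is 0 (so the condition holds vacuously when no π_j exceeds η); moreover the infimum is attained, i.e. the condition holds at η = η*. -/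
open Finset
open scoped Classical

/-! Since `π` is non-increasing on `{1,…,N}`, the indices with `π_j > η` form an initial segment
`{1,…,m}`, and the prefix means `(1/J) ∑_{j ≤ J} π_j` are non-increasing, so the `J` whose prefix
mean is at least `δ` form the initial segment `{1,…,J*}`. On `{1,…,m}` the error condition says
exactly that the prefix mean of length `m` is at least `δ` (and it is vacuous for `m = 0`), so it
holds at `η` iff `m ≤ J*`, i.e. iff `π_{J*+1} ≤ η` whenever `J* < N`. The feasible thresholds in
`[0,1]` are therefore the interval `[η*, 1]`. -/

noncomputable def prefixMean (π : ℕ → ℝ) (J : ℕ) : ℝ := (∑ j ∈ Icc 1 J, π j) / J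

noncomputable def setError (π : ℕ → ℝ) (s : Finset ℕ) : ℝ := (∑ j ∈ s, (1 - π j)) / max 1 (#s : ℝ)

lemma prefixMean_succ_le {π : ℕ → ℝ} {J : ℕ} (hJ : 1 ≤ J)
    (hπ : ∀ j ∈ Icc 1 J, π (J + 1) ≤ π j) : prefixMean π (J + 1) ≤ prefixMean π J := by
  have hJpos : (0 : ℝ) < J := by exact_mod_cast hJ
  have hlast : (J : ℝ) * π (J + 1) ≤ ∑ j ∈ Icc 1 J, π j := by
    simpa using card_nsmul_le_sum _ _ _ hπ
  unfold prefixMean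
  rw [sum_Icc_succ_top (by omega), div_le_div_iff₀ (by positivity) hJpos]
  push_cast
  nlinarith

lemma prefixMean_antitoneOn {N : ℕ} {π : ℕ → ℝ} (hπ : AntitoneOn π (Set.Icc 1 N)) :
    AntitoneOn (prefixMean π) (Set.Icc 1 N) := by
  refine antitoneOn_of_add_one_le Set.ordConnected_Icc fun J _ hJ hJ' => ?_
  refine prefixMean_succ_le hJ.1 fun j hj => ?_
  have hj := mem_Icc.1 hj
  exact hπ ⟨hj.1, hj.2.trans hJ.2⟩ hJ' (by omega)

lemma Nat.mem_iff_le_sSup {S : Set ℕ} (hS : BddAbove S)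
    (hdown : ∀ J ∈ S, ∀ k, 1 ≤ k → k ≤ J → k ∈ S) {k : ℕ} (hk : 1 ≤ k) :
    k ∈ S ↔ k ≤ sSup S := by
  refine ⟨fun h => le_csSup hS h, fun h => ?_⟩
  have hne : S.Nonempty := by
    by_contra hempty
    rw [Set.not_nonempty_iff_eq_empty.1 hempty, csSup_empty, Nat.bot_eq_zero] at h
    omega
  exact hdown _ (Nat.sSup_mem hne hS) k hk h

lemma exists_filter_Icc_eq_Icc {N : ℕ} {p : ℕ → Prop}
    (hp : ∀ i j, 1 ≤ i → i ≤ j → j ≤ N → p j → p i) :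
    ∃ m ≤ N, (Icc 1 N).filter p = Icc 1 m := by
  set F := (Icc 1 N).filter p
  have hF : ∀ j ∈ F, (1 ≤ j ∧ j ≤ N) ∧ p j := fun j hj => by simpa [F] using hj
  refine ⟨F.sup id, Finset.sup_le fun j hj => (hF j hj).1.2, ?_⟩
  ext i
  refine ⟨fun hi => mem_Icc.2 ⟨(hF i hi).1.1, le_sup (f := id) hi⟩, fun hi => ?_⟩
  have hi := mem_Icc.1 hi
  obtain ⟨j, hjF, hj⟩ := exists_mem_eq_sup F (nonempty_iff_ne_empty.2 fun h => by
    simp [h] at hi; omega) id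
  obtain ⟨⟨-, hjN⟩, hpj⟩ := hF j hjF
  rw [hj, id] at hi
  exact mem_filter.2 ⟨mem_Icc.2 ⟨hi.1, hi.2.trans hjN⟩, hp i j hi.1 hi.2 hjN hpj⟩

lemma setError_Icc_le_iff {π : ℕ → ℝ} {δ : ℝ} (hδ : δ ≤ 1) (m : ℕ) :
    setError π (Icc 1 m) ≤ 1 - δ ↔ (1 ≤ m → δ ≤ prefixMean π m) := by
  rcases Nat.eq_zero_or_pos m with rfl | hm
  · simpa [setError] using hδ
  have hmpos : (0 : ℝ) < m := by exact_mod_cast hm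
  have hmax : max (1 : ℝ) (#(Icc 1 m) : ℝ) = m := by
    rw [Nat.card_Icc, Nat.add_sub_cancel]; exact max_eq_right (by exact_mod_cast hm)
  rw [setError, prefixMean, hmax, sum_sub_distrib, sum_const, Nat.card_Icc, Nat.add_sub_cancel,
    div_le_iff₀ hmpos, le_div_iff₀ hmpos, nsmul_eq_mul, mul_one]
  exact ⟨fun h _ => by linarith, fun h => by linarith [h hm]⟩

lemma le_sSup_prefixMean_ge_iff {N : ℕ} {π : ℕ → ℝ} (hπ : AntitoneOn π (Set.Icc 1 N)) (δ : ℝ)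
    {k : ℕ} (hk : 1 ≤ k) (hkN : k ≤ N) :
    k ≤ sSup {J | 1 ≤ J ∧ J ≤ N ∧ δ ≤ prefixMean π J} ↔ δ ≤ prefixMean π k := by
  rw [← Nat.mem_iff_le_sSup ⟨N, fun J hJ => hJ.2.1⟩ ?_ hk]
  · exact ⟨fun h => h.2.2, fun h => ⟨hk, hkN, h⟩⟩
  · exact fun J hJ k hk hkJ => ⟨hk, hkJ.trans hJ.2.1, hJ.2.2.trans
      (prefixMean_antitoneOn hπ ⟨hk, hkJ.trans hJ.2.1⟩ ⟨hJ.1, hJ.2.1⟩ hkJ)⟩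

lemma setError_filter_le_iff {N J : ℕ} {π : ℕ → ℝ} {δ : ℝ} (hπ : AntitoneOn π (Set.Icc 1 N))
    (hδ : δ ≤ 1) (hJ : ∀ k, 1 ≤ k → k ≤ N → (δ ≤ prefixMean π k ↔ k ≤ J)) (η : ℝ) :
    setError π ((Icc 1 N).filter (fun j => η < π j)) ≤ 1 - δ ↔ (J < N → π (J + 1) ≤ η) := by
  obtain ⟨m, hmN, hF⟩ := exists_filter_Icc_eq_Icc (N := N) (p := fun j => η < π j)
    fun i j hi hij hjN h => h.trans_le (hπ ⟨hi, hij.trans hjN⟩ ⟨hi.trans hij, hjN⟩ hij)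
  have hmem : ∀ j, (1 ≤ j ∧ j ≤ m) ↔ (1 ≤ j ∧ j ≤ N) ∧ η < π j := fun j => by
    simpa using (Finset.ext_iff.1 hF j).symm
  rw [hF, setError_Icc_le_iff hδ]
  have hmJ : (1 ≤ m → δ ≤ prefixMean π m) ↔ m ≤ J := by
    rcases Nat.eq_zero_or_pos m with rfl | hm
    · simp
    · exact (imp_iff_right hm).trans (hJ m hm hmN)
  rw [hmJ]
  constructor
  · intro hm hJN
    by_contra! hlt
    have := ((hmem (J + 1)).2 ⟨⟨by omega, hJN⟩, hlt⟩).2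
    omega
  · intro h
    by_contra! hJm
    obtain ⟨⟨hm1, hmN⟩, hηm⟩ := (hmem m).1 ⟨by omega, le_rfl⟩
    have := hπ ⟨by omega, by omega⟩ ⟨hm1, hmN⟩ hJm
    linarith [h (by omega)]

theorem bernoulli_threshold_correct_general
    (N : ℕ)
    (π : ℕ → ℝ)
    (hsorted : ∀ i j : ℕ, 1 ≤ i → i ≤ j → j ≤ N → π j ≤ π i)
    (hbounds : ∀ j : ℕ, 1 ≤ j → j ≤ N → π j ∈ Set.Icc (0 : ℝ) 1)
    (δ : ℝ) (hδ : δ ∈ Set.Ioc (0 : ℝ) 1)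
    -- `J* = max{J ∈ {1,…,N} : (1/J) ∑_{j=1}^J π_j ≥ δ}`, with `J* = 0` if no such `J`
    (Jstar : ℕ)
    (hJstar : Jstar = sSup {J : ℕ | 1 ≤ J ∧ J ≤ N ∧ δ ≤ (∑ j ∈ Finset.Icc 1 J, π j) / J})
    -- `η* = π_{J*+1}` if `J* < N`, and `η* = 0` if `J* = N`
    (ηstar : ℝ)
    (hηstar : ηstar = if Jstar < N then π (Jstar + 1) else 0) :
    ηstar = sInf {η : ℝ | 0 ≤ η ∧ η ≤ 1 ∧
        (∑ j ∈ (Finset.Icc 1 N).filter (fun j => η < π j), (1 - π j)) /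
            max 1 (((Finset.Icc 1 N).filter (fun j => η < π j)).card : ℝ) ≤ 1 - δ} ∧
      (∑ j ∈ (Finset.Icc 1 N).filter (fun j => ηstar < π j), (1 - π j)) /
          max 1 (((Finset.Icc 1 N).filter (fun j => ηstar < π j)).card : ℝ) ≤ 1 - δ := by
  change ηstar = sInf {η : ℝ | 0 ≤ η ∧ η ≤ 1 ∧
      setError π ((Icc 1 N).filter (fun j => η < π j)) ≤ 1 - δ} ∧
    setError π ((Icc 1 N).filter (fun j => ηstar < π j)) ≤ 1 - δ
  have hπ : AntitoneOn π (Set.Icc 1 N) := fun i hi j hj hij => hsorted i j hi.1 hij hj.2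
  have hJ : ∀ k, 1 ≤ k → k ≤ N → (δ ≤ prefixMean π k ↔ k ≤ Jstar) := fun k hk hkN => by
    rw [hJstar]; exact (le_sSup_prefixMean_ge_iff hπ δ hk hkN).symm
  have hcond := setError_filter_le_iff hπ hδ.2 hJ
  have hset : {η : ℝ | 0 ≤ η ∧ η ≤ 1 ∧ setError π ((Icc 1 N).filter (fun j => η < π j)) ≤ 1 - δ}
      = Set.Icc ηstar 1 := by
    ext η
    simp only [Set.mem_ofPred_eq, Set.mem_Icc, hcond, hηstar]
    split_ifs with hJN
    · have := (hbounds (Jstar + 1) (by omega) hJN).1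
      grind
    · tauto
  have hη1 : ηstar ≤ 1 := by
    rw [hηstar]; split_ifs with hJN
    exacts [(hbounds (Jstar + 1) (by omega) hJN).2, zero_le_one]
  rw [hset, csInf_Icc hη1, hcond]
  exact ⟨rfl, fun hJN => by rw [hηstar, if_pos hJN]⟩

/-- Correctness of the Bernoulli-sequence threshold: for sorted confidence probabilities
`1 ≥ π_1 ≥ ⋯ ≥ π_N ≥ 0` and a target level `δ ∈ (0,1]`, the threshold `η*` returned by the
Bernoulli sequence predictive set algorithm equals
`inf{ η ∈ [0,1] : (1/max(1, #{j : π_j > η})) ∑_{j : π_j > η} (1 − π_j) ≤ 1 − δ }`,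
and the defining condition holds at `η = η*` (the infimum is attained). -/
theorem bernoulli_threshold_correct
    (N : ℕ) (hN : 1 ≤ N)
    (π : ℕ → ℝ)
    (hsorted : ∀ i j : ℕ, 1 ≤ i → i ≤ j → j ≤ N → π j ≤ π i)
    (hbounds : ∀ j : ℕ, 1 ≤ j → j ≤ N → π j ∈ Set.Icc (0 : ℝ) 1)
    (δ : ℝ) (hδ : δ ∈ Set.Ioc (0 : ℝ) 1)
    -- `J* = max{J ∈ {1,…,N} : (1/J) ∑_{j=1}^J π_j ≥ δ}`, with `J* = 0` if no such `J`
    (Jstar : ℕ)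
    (hJstar : Jstar = sSup {J : ℕ | 1 ≤ J ∧ J ≤ N ∧ δ ≤ (∑ j ∈ Finset.Icc 1 J, π j) / J})
    -- `η* = π_{J*+1}` if `J* < N`, and `η* = 0` if `J* = N`
    (ηstar : ℝ)
    (hηstar : ηstar = if Jstar < N then π (Jstar + 1) else 0) :
    ηstar = sInf {η : ℝ | 0 ≤ η ∧ η ≤ 1 ∧
        (∑ j ∈ (Finset.Icc 1 N).filter (fun j => η < π j), (1 - π j)) /
            max 1 (((Finset.Icc 1 N).filter (fun j => η < π j)).card : ℝ) ≤ 1 - δ} ∧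
      (∑ j ∈ (Finset.Icc 1 N).filter (fun j => ηstar < π j), (1 - π j)) /
          max 1 (((Finset.Icc 1 N).filter (fun j => ηstar < π j)).card : ℝ) ≤ 1 - δ :=
  bernoulli_threshold_correct_general N π hsorted hbounds δ hδ Jstar hJstar ηstar hηstar
end
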